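/- arXiv:2403.12579 — 12 statements merged into one kernel-verified Lean document; each statement's English description precedes it below -/
import Mathlib

section
/- For every β = (βx, βy) ∈ (0,∞)² and every z = (x,y) ∈ X × Y with f(x) < +∞, the self-centered smoothed gap admits the closed form G_β(z) = f(x) − f(p) + ⟨A(x − p), y⟩ − (βx/2)‖p − x‖² + (1/(2βy))‖Ax − b‖², where p = Prox_{βx⁻¹ f}(x − βx⁻¹ Aᵀ y). -/
open scoped RealInnerProductSpace
open Filter Topology Metric

noncomputable section

variable {X Y : Type*} [NormedAddCommGroup X] [InnerProductSpace ℝ X]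
  [NormedAddCommGroup Y] [InnerProductSpace ℝ Y]

/-- The Lagrangian `L(x, y) = f(x) + ⟪A x − b, y⟫`. -/
def Lag (f : X → EReal) (A : X →L[ℝ] Y) (b : Y) (x : X) (y : Y) : EReal :=
  f x + ((⟪A x - b, y⟫ : ℝ) : EReal)

/-- The smoothed duality gap `G_β((x, y); (xd, yd))`, valued in `ℝ ∪ {+∞}` (here `EReal`;
the inner expression is `−∞` exactly when `f x' = +∞`, so such `x'` do not contribute). -/
def smoothedGap (f : X → EReal) (A : X →L[ℝ] Y) (b : Y) (βx βy : ℝ)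
    (x : X) (y : Y) (xd : X) (yd : Y) : EReal :=
  ⨆ w : X × Y,
    (Lag f A b x w.2 - Lag f A b w.1 y
      - ((βx / 2 * ‖w.1 - xd‖ ^ 2 + βy / 2 * ‖w.2 - yd‖ ^ 2 : ℝ) : EReal))

/-- `f` is proper: never `−∞` and not identically `+∞`. -/
def EProper (f : X → EReal) : Prop := (∀ u, f u ≠ ⊥) ∧ ∃ u, f u ≠ ⊤

/-- Convexity for an `EReal`-valued function. -/
def EConvexOn (f : X → EReal) : Prop :=
  ∀ u v : X, ∀ t : ℝ, 0 ≤ t → t ≤ 1 →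
    f (t • u + (1 - t) • v) ≤ (t : EReal) * f u + ((1 - t : ℝ) : EReal) * f v

/-- The subdifferential `∂f(x) = {q | ∀ u, f(u) ≥ f(x) + ⟪q, u − x⟫}`. -/
def ESubdiff (f : X → EReal) (x : X) : Set X :=
  {q | ∀ u : X, f x + ((⟪q, u - x⟫ : ℝ) : EReal) ≤ f u}

/-- `p = Prox_{s f}(v)`: `p` is the (unique) minimizer of `f(·) + (1/(2s))‖· − v‖²`. -/
def IsProx (f : X → EReal) (s : ℝ) (v p : X) : Prop :=
  ∀ u : X, f p + ((1 / (2 * s) * ‖p - v‖ ^ 2 : ℝ) : EReal)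
    ≤ f u + ((1 / (2 * s) * ‖u - v‖ ^ 2 : ℝ) : EReal)

/-- The Fenchel–Legendre conjugate `f*(φ) = sup_u (⟪φ, u⟫ − f(u))`. -/
def fenchel (f : X → EReal) (φ : X) : EReal := ⨆ u : X, (((⟪φ, u⟫ : ℝ) : EReal) - f u)

/-- The domain of the Fenchel conjugate. -/
def fdom (f : X → EReal) : Set X := {φ | fenchel f φ ≠ ⊤}

/-- `a = Proj_S(v)`: `a` is the (unique, for `S` closed convex nonempty) Euclidean
projection of `v` onto `S`. -/
def IsProj (S : Set X) (v a : X) : Prop := a ∈ S ∧ ∀ u ∈ S, ‖a - v‖ ≤ ‖u - v‖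

/-- `(xs, ys)` is a saddle point of the Lagrangian. -/
def IsSaddle (f : X → EReal) (A : X →L[ℝ] Y) (b : Y) (xs : X) (ys : Y) : Prop :=
  ∀ (x' : X) (y' : Y), Lag f A b xs y' ≤ Lag f A b xs ys ∧ Lag f A b xs ys ≤ Lag f A b x' ys

/-- The set of saddle points `Z⋆`. -/
def saddleSet (f : X → EReal) (A : X →L[ℝ] Y) (b : Y) : Set (X × Y) :=
  {zs | IsSaddle f A b zs.1 zs.2}

/-- Euclidean distance from a point of `X × Y` to a set. -/
def distZ (z : X × Y) (S : Set (X × Y)) : ℝ :=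
  ⨅ w : S, Real.sqrt (‖z.1 - (w : X × Y).1‖ ^ 2 + ‖z.2 - (w : X × Y).2‖ ^ 2)

/-- The projected duality gap `D(z)`, where `fx = f(x)` and `fa = f*(a)` (both finite). -/
def PDG (fx fa : ℝ) (A : X →L[ℝ] Y) (At : Y →L[ℝ] X) (b : Y) (a x : X) (y : Y) : ℝ :=
  |fx + fa + ⟪b, y⟫| ^ 2 + ‖a + At y‖ ^ 2 + ‖A x - b‖ ^ 2

private lemma ineq_a' {Y : Type*} [NormedAddCommGroup Y] [InnerProductSpace ℝ Y]
    (βy : ℝ) (hβy : 0 < βy) (c y' y : Y) :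
    ⟪c, y'⟫ - βy / 2 * ‖y' - y‖ ^ 2 ≤ ⟪c, y⟫ + 1 / (2 * βy) * ‖c‖ ^ 2 := by
  have h1 : ⟪c, y' - y⟫ = ⟪c, y'⟫ - ⟪c, y⟫ := inner_sub_right c y' y
  have h2 := real_inner_le_norm c (y' - y)
  have h4 : (0:ℝ) < 2 * βy := by linarith
  have h3 : ⟪c, y' - y⟫ * (2 * βy) ≤ ‖c‖ ^ 2 + βy ^ 2 * ‖y' - y‖ ^ 2 := by
    nlinarith [sq_nonneg (‖c‖ - βy * ‖y' - y‖)]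
  have h5 : ⟪c, y' - y⟫ ≤ (‖c‖ ^ 2 + βy ^ 2 * ‖y' - y‖ ^ 2) / (2 * βy) :=
    (le_div_iff₀ h4).mpr h3
  have h6 : (‖c‖ ^ 2 + βy ^ 2 * ‖y' - y‖ ^ 2) / (2 * βy)
      = 1 / (2 * βy) * ‖c‖ ^ 2 + βy / 2 * ‖y' - y‖ ^ 2 := by
    field_simp
  linarith [h1 ▸ h5]

private lemma prox_expand' {X : Type*} [NormedAddCommGroup X] [InnerProductSpace ℝ X]
    (βx : ℝ) (hβx : 0 < βx) (x w u : X) :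
    1 / (2 * βx⁻¹) * ‖u - (x - βx⁻¹ • w)‖ ^ 2
      = βx / 2 * ‖u - x‖ ^ 2 + ⟪u, w⟫ + (-⟪x, w⟫ + 1 / (2 * βx) * ‖w‖ ^ 2) := by
  have h : u - (x - βx⁻¹ • w) = (u - x) + βx⁻¹ • w := by abel
  rw [h, norm_add_sq_real, real_inner_smul_right, norm_smul, inner_sub_left,
    Real.norm_eq_abs, abs_of_pos (inv_pos.mpr hβx), mul_pow]
  field_simp
  ring

/-- closed form of the self-centered smoothed gap.
For every `β = (βx, βy) ∈ (0,∞)²` and every `z = (x, y)` with `f(x) < +∞`,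
`G_β(z) = f(x) − f(p) + ⟪A(x − p), y⟫ − (βx/2)‖p − x‖² + (1/(2βy))‖Ax − b‖²`,
where `p = Prox_{βx⁻¹ f}(x − βx⁻¹ Aᵀ y)`. -/
theorem smoothedGap_closed_form
    [FiniteDimensional ℝ X] [FiniteDimensional ℝ Y]
    (f : X → EReal) (A : X →L[ℝ] Y) (At : Y →L[ℝ] X) (b : Y)
    (hf_proper : EProper f) (hf_lsc : LowerSemicontinuous f) (hf_conv : EConvexOn f)
    (hAt : ∀ (u : X) (v : Y), ⟪A u, v⟫ = ⟪u, At v⟫)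
    (βx βy : ℝ) (hβx : 0 < βx) (hβy : 0 < βy)
    (x : X) (y : Y) (hfx : f x < ⊤)
    (p : X) (hp : IsProx f βx⁻¹ (x - βx⁻¹ • At y) p) :
    smoothedGap f A b βx βy x y x y
      = f x - f p
        + ((⟪A (x - p), y⟫ - βx / 2 * ‖p - x‖ ^ 2
            + 1 / (2 * βy) * ‖A x - b‖ ^ 2 : ℝ) : EReal) := by
  obtain ⟨hbot, -⟩ := hf_proper
  have hfx_ne_top : f x ≠ ⊤ := hfx.ne
  set F := (f x).toReal with hF
  have hfxF : f x = (F : EReal) := (EReal.coe_toReal hfx_ne_top (hbot x)).symm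
  have hfp_ne_top : f p ≠ ⊤ := by
    intro h
    have h2 := hp x
    rw [h, hfxF, ← EReal.coe_add, EReal.top_add_coe] at h2
    exact (EReal.coe_lt_top _).not_ge h2
  set P := (f p).toReal with hP
  have hfpP : f p = (P : EReal) := (EReal.coe_toReal hfp_ne_top (hbot p)).symm
  have hprox : ∀ (u : X) (r : ℝ), f u = (r : EReal) →
      P + (βx / 2 * ‖p - x‖ ^ 2 + ⟪A p, y⟫) ≤ r + (βx / 2 * ‖u - x‖ ^ 2 + ⟪A u, y⟫) := by
    intro u r hr
    have h2 := hp u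
    rw [hfpP, hr, ← EReal.coe_add, ← EReal.coe_add, EReal.coe_le_coe_iff] at h2
    rw [prox_expand' βx hβx x (At y) p, prox_expand' βx hβx x (At y) u,
      ← hAt p y, ← hAt u y] at h2
    linarith
  set y0 := y + βy⁻¹ • (A x - b) with hy0
  have hval : Lag f A b x y0 - Lag f A b p y
      - ((βx / 2 * ‖p - x‖ ^ 2 + βy / 2 * ‖y0 - y‖ ^ 2 : ℝ) : EReal)
      = f x - f p + ((⟪A (x - p), y⟫ - βx / 2 * ‖p - x‖ ^ 2
          + 1 / (2 * βy) * ‖A x - b‖ ^ 2 : ℝ) : EReal) := by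
    rw [Lag, Lag, hfxF, hfpP, ← EReal.coe_add, ← EReal.coe_add, ← EReal.coe_sub,
      ← EReal.coe_sub, ← EReal.coe_sub, ← EReal.coe_add]
    congr 1
    have e1 : ⟪A x - b, y0⟫ = ⟪A x - b, y⟫ + βy⁻¹ * ‖A x - b‖ ^ 2 := by
      rw [hy0, inner_add_right, real_inner_smul_right, real_inner_self_eq_norm_sq]
    have e2 : ‖y0 - y‖ ^ 2 = βy⁻¹ ^ 2 * ‖A x - b‖ ^ 2 := by
      have h : y0 - y = βy⁻¹ • (A x - b) := by rw [hy0]; abel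
      rw [h, norm_smul, Real.norm_eq_abs, abs_of_pos (inv_pos.mpr hβy), mul_pow]
    have e3 : ⟪A (x - p), y⟫ = ⟪A x - b, y⟫ - ⟪A p - b, y⟫ := by
      rw [map_sub, inner_sub_left, inner_sub_left, inner_sub_left]; ring
    rw [e1, e2, e3]
    field_simp
    ring
  apply le_antisymm
  · apply iSup_le
    rintro ⟨x', y'⟩
    dsimp only
    by_cases hx' : f x' = ⊤
    · have h1 : Lag f A b x' y = ⊤ := by
        rw [Lag, hx', EReal.top_add_coe]
      have h2 : Lag f A b x y' - Lag f A b x' y = (⊥ : EReal) := by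
        rw [h1, Lag, hfxF, ← EReal.coe_add]
        rfl
      rw [h2]
      have h3 : (⊥ : EReal) - ((βx / 2 * ‖x' - x‖ ^ 2 + βy / 2 * ‖y' - y‖ ^ 2 : ℝ) : EReal)
          = ⊥ := rfl
      rw [h3]
      exact bot_le
    · obtain ⟨r, hr⟩ : ∃ r : ℝ, f x' = (r : EReal) :=
        ⟨(f x').toReal, (EReal.coe_toReal hx' (hbot x')).symm⟩
      rw [Lag, Lag, hfxF, hfpP, hr, ← EReal.coe_add, ← EReal.coe_add, ← EReal.coe_sub,
        ← EReal.coe_sub, ← EReal.coe_sub, ← EReal.coe_add, EReal.coe_le_coe_iff]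
      have ha := ineq_a' βy hβy (A x - b) y' y
      have hb := hprox x' r hr
      have e3 : ⟪A (x - p), y⟫ = ⟪A x, y⟫ - ⟪A p, y⟫ := by
        rw [map_sub, inner_sub_left]
      have e4 : ⟪A x' - b, y⟫ = ⟪A x', y⟫ - ⟪b, y⟫ := inner_sub_left _ _ _
      have e5 : ⟪A x - b, y⟫ = ⟪A x, y⟫ - ⟪b, y⟫ := inner_sub_left _ _ _
      linarith [ha, hb, e3, e4, e5]
  · rw [← hval]
    exact le_iSup (fun w : X × Y => Lag f A b x w.2 - Lag f A b w.1 y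
      - ((βx / 2 * ‖w.1 - x‖ ^ 2 + βy / 2 * ‖w.2 - y‖ ^ 2 : ℝ) : EReal)) (p, y0)
end
end

section
/- For every β = (βx, βy) ∈ (0,∞)² and every z = (x,y) ∈ X × Y with f(x) < +∞, the self-centered smoothed gap satisfies G_β(z) ≥ (βx/2)‖x − p‖² + (1/(2βy))‖Ax − b‖², where p = Prox_{βx⁻¹ f}(x − βx⁻¹ Aᵀ y). -/
open scoped RealInnerProductSpace
open Filter Topology Metric

noncomputable section

variable {X Y : Type*} [NormedAddCommGroup X] [InnerProductSpace ℝ X]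
  [NormedAddCommGroup Y] [InnerProductSpace ℝ Y]

/-!
Since `f` is convex, comparing the prox point `p` with `p + t (u - p)` in the prox problem and
letting `t → 0` gives the variational inequality `βx (v - p) ∈ ∂f(p)` for `v = x - βx⁻¹ Aᵀ y`;
at `u = x` it reads `f x - f p + ⟪A (x - p), y⟫ ≥ βx ‖x - p‖²`. Evaluating the supremum defining
`G_β` at `(p, y + βy⁻¹ (A x - b))`, the primal part is then at least `(βx / 2) ‖x - p‖²` and the
dual part equals `(1 / (2 βy)) ‖A x - b‖²`.
-/

open Set

lemma nonneg_of_forall_Ioc_nonneg_add_mul {a b : ℝ}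
    (h : ∀ t ∈ Ioc (0 : ℝ) 1, 0 ≤ a + t * b) : 0 ≤ a := by
  have hlim : Tendsto (fun t : ℝ => a + t * b) (𝓝[>] 0) (𝓝 a) := by
    have : Tendsto (fun t : ℝ => a + t * b) (𝓝 0) (𝓝 (a + 0 * b)) :=
      (continuous_const.add (continuous_id.mul continuous_const)).tendsto 0
    simpa using this.mono_left nhdsWithin_le_nhds
  exact ge_of_tendsto hlim (eventually_of_mem (Ioc_mem_nhdsGT one_pos) h)

lemma EConvexOn.le_coe {f : X → EReal} (hf : EConvexOn f) {u v : X} {a b : ℝ}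
    (hu : f u = a) (hv : f v = b) {t : ℝ} (ht₀ : 0 ≤ t) (ht₁ : t ≤ 1) :
    f (t • u + (1 - t) • v) ≤ ((t * a + (1 - t) * b : ℝ) : EReal) := by
  simpa only [hu, hv, EReal.coe_add, EReal.coe_mul] using hf u v t ht₀ ht₁

lemma ne_top_of_mem_eSubdiff {f : X → EReal} {p q u : X} (hq : q ∈ ESubdiff f p)
    (hu : f u ≠ ⊤) : f p ≠ ⊤ := by
  intro htop
  simpa [htop] using (hq u).trans_lt hu.lt_top

lemma IsProx.inner_le_sub {f : X → EReal} (hconv : EConvexOn f) {s : ℝ} (hs : 0 < s)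
    {v p u : X} (hp : IsProx f s v p) {a c : ℝ} (hu : f u = a) (hpc : f p = c) :
    s⁻¹ * ⟪v - p, u - p⟫ ≤ a - c := by
  suffices ∀ t ∈ Ioc (0 : ℝ) 1,
      0 ≤ (a - c - s⁻¹ * ⟪v - p, u - p⟫) + t * (1 / (2 * s) * ‖u - p‖ ^ 2) by
    linarith [nonneg_of_forall_Ioc_nonneg_add_mul this]
  rintro t ⟨ht₀, ht₁⟩
  have hprox := (hp (t • u + (1 - t) • p)).trans
    (add_le_add_left (hconv.le_coe hu hpc ht₀.le ht₁) _)
  rw [hpc, ← EReal.coe_add, ← EReal.coe_add, EReal.coe_le_coe_iff] at hprox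
  have hexp : ‖t • u + (1 - t) • p - v‖ ^ 2
      = ‖v - p‖ ^ 2 - 2 * t * ⟪v - p, u - p⟫ + t ^ 2 * ‖u - p‖ ^ 2 := by
    rw [show t • u + (1 - t) • p - v = t • (u - p) - (v - p) by module, norm_sub_sq_real,
      real_inner_smul_left, real_inner_comm, norm_smul, Real.norm_eq_abs, abs_of_pos ht₀]
    ring
  rw [hexp, norm_sub_rev p v] at hprox
  have hs' : s⁻¹ = 2 * (1 / (2 * s)) := by field_simp
  have : 0 ≤ t * ((a - c - s⁻¹ * ⟪v - p, u - p⟫) + t * (1 / (2 * s) * ‖u - p‖ ^ 2)) := by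
    rw [hs']
    linarith
  exact (mul_nonneg_iff_of_pos_left ht₀).1 this

theorem IsProx.smul_sub_mem_eSubdiff {f : X → EReal} (hf : ∀ u, f u ≠ ⊥)
    (hconv : EConvexOn f) {s : ℝ} (hs : 0 < s) {v p : X} (hp : IsProx f s v p) :
    s⁻¹ • (v - p) ∈ ESubdiff f p := by
  intro u
  rcases eq_or_ne (f u) ⊤ with hu | hu
  · exact hu ▸ le_top
  obtain ⟨a, ha⟩ : ∃ a : ℝ, f u = a := ⟨_, (EReal.coe_toReal hu (hf u)).symm⟩
  have hp_top : f p ≠ ⊤ := fun htop => by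
    have := hp u
    rw [htop, EReal.top_add_coe, ha, ← EReal.coe_add, top_le_iff] at this
    exact EReal.coe_ne_top _ this
  obtain ⟨c, hc⟩ : ∃ c : ℝ, f p = c := ⟨_, (EReal.coe_toReal hp_top (hf p)).symm⟩
  rw [hc, ha, ← EReal.coe_add, EReal.coe_le_coe_iff, real_inner_smul_left]
  linarith [hp.inner_le_sub hconv hs ha hc]

lemma coe_le_smoothedGap {f : X → EReal} (A : X →L[ℝ] Y) (b : Y) (βx βy : ℝ) {x x' : X}
    (y y' : Y) (xd : X) (yd : Y) {a c : ℝ} (hx : f x = a) (hx' : f x' = c) :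
    ((a + ⟪A x - b, y'⟫ - (c + ⟪A x' - b, y⟫)
        - (βx / 2 * ‖x' - xd‖ ^ 2 + βy / 2 * ‖y' - yd‖ ^ 2) : ℝ) : EReal)
      ≤ smoothedGap f A b βx βy x y xd yd := by
  refine le_trans (le_of_eq ?_) (le_iSup _ (x', y'))
  simp only [Lag, hx, hx']
  norm_cast

lemma inner_add_smul_sub_norm_sq {β : ℝ} (hβ : β ≠ 0) (r y : Y) :
    ⟪r, y + β⁻¹ • r⟫ - β / 2 * ‖y + β⁻¹ • r - y‖ ^ 2 = ⟪r, y⟫ + 1 / (2 * β) * ‖r‖ ^ 2 := by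
  rw [add_sub_cancel_left, inner_add_right, real_inner_smul_right, real_inner_self_eq_norm_sq,
    norm_smul, mul_pow, Real.norm_eq_abs, sq_abs]
  field_simp
  ring

theorem smoothedGap_lower_bound_general
    (f : X → EReal) (A : X →L[ℝ] Y) (At : Y →L[ℝ] X) (b : Y)
    (hf_proper : EProper f) (hf_conv : EConvexOn f)
    (hAt : ∀ (u : X) (v : Y), ⟪A u, v⟫ = ⟪u, At v⟫)
    (βx βy : ℝ) (hβx : 0 < βx) (hβy : 0 < βy)
    (x : X) (y : Y) (hfx : f x < ⊤)
    (p : X) (hp : IsProx f βx⁻¹ (x - βx⁻¹ • At y) p) :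
    ((βx / 2 * ‖x - p‖ ^ 2 + 1 / (2 * βy) * ‖A x - b‖ ^ 2 : ℝ) : EReal)
      ≤ smoothedGap f A b βx βy x y x y := by
  have hsub := hp.smul_sub_mem_eSubdiff hf_proper.1 hf_conv (inv_pos.2 hβx)
  obtain ⟨a, ha⟩ : ∃ a : ℝ, f x = a := ⟨_, (EReal.coe_toReal hfx.ne (hf_proper.1 x)).symm⟩
  obtain ⟨c, hc⟩ : ∃ c : ℝ, f p = c :=
    ⟨_, (EReal.coe_toReal (ne_top_of_mem_eSubdiff hsub hfx.ne) (hf_proper.1 p)).symm⟩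
  have hdescent : βx * ‖x - p‖ ^ 2 ≤ a - c + ⟪A (x - p), y⟫ := by
    have hx := hsub x
    rw [hc, ha, ← EReal.coe_add, EReal.coe_le_coe_iff, inv_inv,
      show βx • (x - βx⁻¹ • At y - p) = βx • (x - p) - At y by
        rw [smul_sub, smul_sub, smul_sub, smul_inv_smul₀ hβx.ne']; abel,
      inner_sub_left, real_inner_smul_left, real_inner_self_eq_norm_sq, real_inner_comm] at hx
    rw [hAt]
    linarith
  refine le_trans ?_ (coe_le_smoothedGap A b βx βy y (y + βy⁻¹ • (A x - b)) x y ha hc)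
  have hdual := inner_add_smul_sub_norm_sq hβy.ne' (A x - b) y
  have hprimal : ⟪A x - b, y⟫ - ⟪A p - b, y⟫ = ⟪A (x - p), y⟫ := by
    rw [← inner_sub_left, map_sub, sub_sub_sub_cancel_right]
  rw [EReal.coe_le_coe_iff, norm_sub_rev p x]
  linarith

/-- lower bound on the self-centered smoothed gap.
`G_β(z) ≥ (βx/2)‖x − p‖² + (1/(2βy))‖Ax − b‖²`, where
`p = Prox_{βx⁻¹ f}(x − βx⁻¹ Aᵀ y)`. -/
theorem smoothedGap_lower_bound
    [FiniteDimensional ℝ X] [FiniteDimensional ℝ Y]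
    (f : X → EReal) (A : X →L[ℝ] Y) (At : Y →L[ℝ] X) (b : Y)
    (hf_proper : EProper f) (hf_lsc : LowerSemicontinuous f) (hf_conv : EConvexOn f)
    (hAt : ∀ (u : X) (v : Y), ⟪A u, v⟫ = ⟪u, At v⟫)
    (βx βy : ℝ) (hβx : 0 < βx) (hβy : 0 < βy)
    (x : X) (y : Y) (hfx : f x < ⊤)
    (p : X) (hp : IsProx f βx⁻¹ (x - βx⁻¹ • At y) p) :
    ((βx / 2 * ‖x - p‖ ^ 2 + 1 / (2 * βy) * ‖A x - b‖ ^ 2 : ℝ) : EReal)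
      ≤ smoothedGap f A b βx βy x y x y :=
  smoothedGap_lower_bound_general f A At b hf_proper hf_conv hAt βx βy hβx hβy x y hfx p hp
end
end

section
/- For every β = (βx, βy) ∈ (0,∞)² and every z = (x,y) ∈ X × Y with f(x) < +∞, the feasibility error is bounded by the self-centered smoothed gap: ‖Ax − b‖ ≤ √(2 βy G_β(z)). -/
open scoped RealInnerProductSpace
open Filter Topology Metric

noncomputable section

variable {X Y : Type*} [NormedAddCommGroup X] [InnerProductSpace ℝ X]
  [NormedAddCommGroup Y] [InnerProductSpace ℝ Y]

/-- feasibility error bounded by the smoothed gap.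
For every `β ∈ (0,∞)²` and every `z = (x,y)` with `f(x) < +∞`,
`‖Ax − b‖ ≤ √(2 βy G_β(z))` (the value `g` of the self-centered smoothed gap,
which is finite under the standing assumptions, is given by `hg`). -/
theorem feasibility_le_sqrt_smoothedGap
    [FiniteDimensional ℝ X] [FiniteDimensional ℝ Y]
    (f : X → EReal) (A : X →L[ℝ] Y) (b : Y)
    (hf_proper : EProper f) (hf_lsc : LowerSemicontinuous f) (hf_conv : EConvexOn f)
    (βx βy : ℝ) (hβx : 0 < βx) (hβy : 0 < βy)
    (x : X) (y : Y) (hfx : f x < ⊤)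
    (g : ℝ) (hg : smoothedGap f A b βx βy x y x y = (g : EReal)) :
    ‖A x - b‖ ≤ Real.sqrt (2 * βy * g) :=  by
  set d := A x - b with hd
  obtain ⟨hne_bot, -⟩ := hf_proper
  have hfr : f x = ((f x).toReal : EReal) := (EReal.coe_toReal hfx.ne (hne_bot x)).symm
  set r := (f x).toReal with hrdef
  -- pick the witness w = (x, y + (1/βy) • d)
  set w : X × Y := (x, y + (βy⁻¹) • d) with hw
  have key : (Lag f A b x w.2 - Lag f A b w.1 y
      - ((βx / 2 * ‖w.1 - x‖ ^ 2 + βy / 2 * ‖w.2 - y‖ ^ 2 : ℝ) : EReal))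
      = ((‖d‖ ^ 2 / (2 * βy) : ℝ) : EReal) := by
    have h1 : Lag f A b x w.2 = ((r + (⟪d, y⟫ + βy⁻¹ * ‖d‖ ^ 2) : ℝ) : EReal) := by
      simp only [Lag, hw, hfr]
      rw [← EReal.coe_add]
      congr 1
      rw [inner_add_right, real_inner_smul_right, real_inner_self_eq_norm_sq]
    have h2 : Lag f A b w.1 y = ((r + ⟪d, y⟫ : ℝ) : EReal) := by
      simp only [Lag, hw, hfr]
      rw [← EReal.coe_add]
    rw [h1, h2, ← EReal.coe_sub, ← EReal.coe_sub]
    congr 1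
    have hw1 : w.1 - x = 0 := by simp [hw]
    have hw2 : w.2 - y = βy⁻¹ • d := by simp [hw]
    rw [hw1, hw2]
    simp only [norm_zero, norm_smul, Real.norm_eq_abs, abs_of_pos (inv_pos.mpr hβy)]
    field_simp
    ring
  have hle : ((‖d‖ ^ 2 / (2 * βy) : ℝ) : EReal) ≤ (g : EReal) := by
    rw [← hg, smoothedGap, ← key]
    exact le_iSup (fun w : X × Y => (Lag f A b x w.2 - Lag f A b w.1 y
      - ((βx / 2 * ‖w.1 - x‖ ^ 2 + βy / 2 * ‖w.2 - y‖ ^ 2 : ℝ) : EReal))) w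
  have hr : ‖d‖ ^ 2 / (2 * βy) ≤ g := EReal.coe_le_coe_iff.mp hle
  have h2 : ‖d‖ ^ 2 ≤ 2 * βy * g := by
    have h2b : 0 < 2 * βy := by linarith
    calc ‖d‖ ^ 2 = (‖d‖ ^ 2 / (2 * βy)) * (2 * βy) := by field_simp
    _ ≤ g * (2 * βy) := by exact mul_le_mul_of_nonneg_right hr h2b.le
    _ = 2 * βy * g := by ring
  calc ‖d‖ = Real.sqrt (‖d‖ ^ 2) := by rw [Real.sqrt_sq (norm_nonneg d)]
  _ ≤ Real.sqrt (2 * βy * g) := Real.sqrt_le_sqrt h2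
end
end

section
/- Let β = (βx, βy) ∈ (0,∞)², let (x⋆, y⋆) be a saddle point of L, and let (x,y) ∈ X × Y. Then the outer-saddle smoothed gap satisfies G_β((x⋆, y); (x, y⋆)) ≥ −(βx/2)‖x − x⋆‖² + (βx/2)‖x_β(y) − x⋆‖², where x_β(y) = argmax_{x'∈X} [ −f(x') − ⟨Ax' − b, y⟩ − (βx/2)‖x' − x‖² ]. -/
open scoped RealInnerProductSpace
open Filter Topology Metric

noncomputable section

variable {X Y : Type*} [NormedAddCommGroup X] [InnerProductSpace ℝ X]
  [NormedAddCommGroup Y] [InnerProductSpace ℝ Y]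

private lemma add_coe_eq_top_imp {z : EReal} {r : ℝ} (h : z + (r : EReal) = ⊤) : z = ⊤ := by
  induction z with
  | bot => simp at h
  | coe s => rw [← EReal.coe_add] at h; exact absurd h (EReal.coe_ne_top _)
  | top => rfl

private lemma norm_combo_sq {X : Type*} [NormedAddCommGroup X] [InnerProductSpace ℝ X]
    (a c d : X) (t : ℝ) :
    ‖(t • a + (1 - t) • c) - d‖ ^ 2
      = t * ‖a - d‖ ^ 2 + (1 - t) * ‖c - d‖ ^ 2 - t * (1 - t) * ‖a - c‖ ^ 2 := by
  have h1 : (t • a + (1 - t) • c) - d = t • (a - d) + (1 - t) • (c - d) := by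
    rw [smul_sub, smul_sub]; module
  have e2 : a - c = (a - d) - (c - d) := by abel
  rw [h1, e2]
  set u := a - d with hu
  set v := c - d with hv
  have h3 : ‖t • u + (1 - t) • v‖ ^ 2
      = t ^ 2 * ‖u‖ ^ 2 + 2 * (t * (1 - t)) * ⟪u, v⟫ + (1 - t) ^ 2 * ‖v‖ ^ 2 := by
    rw [norm_add_sq_real, norm_smul, norm_smul, real_inner_smul_left, real_inner_smul_right]
    simp only [Real.norm_eq_abs, mul_pow, sq_abs]
    ring
  have h4 : ‖u - v‖ ^ 2 = ‖u‖ ^ 2 - 2 * ⟪u, v⟫ + ‖v‖ ^ 2 := norm_sub_sq_real u v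
  rw [h3, h4]; ring

/-- lower bound on the outer-saddle smoothed gap.
If `(x⋆, y⋆)` is a saddle point of `L`, then
`G_β((x⋆, y); (x, y⋆)) ≥ −(βx/2)‖x − x⋆‖² + (βx/2)‖x_β(y) − x⋆‖²`,
where `x_β(y)` is the maximizer of `x' ↦ −f(x') − ⟪Ax' − b, y⟫ − (βx/2)‖x' − x‖²`. -/
theorem outer_saddle_smoothedGap_lower_bound
    [FiniteDimensional ℝ X] [FiniteDimensional ℝ Y]
    (f : X → EReal) (A : X →L[ℝ] Y) (b : Y)
    (hf_proper : EProper f) (hf_lsc : LowerSemicontinuous f) (hf_conv : EConvexOn f)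
    (βx βy : ℝ) (hβx : 0 < βx) (hβy : 0 < βy)
    (xs : X) (ys : Y) (hsaddle : IsSaddle f A b xs ys)
    (x : X) (y : Y)
    (xb : X)
    (hxb : ∀ x' : X,
      -f x' + ((-⟪A x' - b, y⟫ - βx / 2 * ‖x' - x‖ ^ 2 : ℝ) : EReal)
        ≤ -f xb + ((-⟪A xb - b, y⟫ - βx / 2 * ‖xb - x‖ ^ 2 : ℝ) : EReal)) :
    ((-(βx / 2) * ‖x - xs‖ ^ 2 + βx / 2 * ‖xb - xs‖ ^ 2 : ℝ) : EReal)
      ≤ smoothedGap f A b βx βy xs y x ys := by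
  classical
  obtain ⟨hfbot, u0, hu0⟩ := hf_proper
  -- `f xs` is finite
  have hxs_ne_top : f xs ≠ ⊤ := by
    intro h
    have h2 := (hsaddle u0 ys).2
    rw [Lag, Lag, h, EReal.top_add_coe, top_le_iff] at h2
    exact hu0 (add_coe_eq_top_imp h2)
  set Fs : ℝ := (f xs).toReal with hFsdef
  have hFs : (Fs : EReal) = f xs := EReal.coe_toReal hxs_ne_top (hfbot xs)
  -- `f xb` is finite
  have hxb_ne_top : f xb ≠ ⊤ := by
    intro h
    have h2 := hxb xs
    rw [h, EReal.neg_top, EReal.bot_add, ← hFs, ← EReal.coe_neg, ← EReal.coe_add,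
      le_bot_iff] at h2
    exact EReal.coe_ne_bot _ h2
  set Fb : ℝ := (f xb).toReal with hFbdef
  have hFb : (Fb : EReal) = f xb := EReal.coe_toReal hxb_ne_top (hfbot xb)
  -- real form of the optimality of xb
  have key : ∀ (x' : X) (r : ℝ), f x' = (r : EReal) →
      -r + (-⟪A x' - b, y⟫ - βx / 2 * ‖x' - x‖ ^ 2)
        ≤ -Fb + (-⟪A xb - b, y⟫ - βx / 2 * ‖xb - x‖ ^ 2) := by
    intro x' r hr
    have h2 := hxb x'
    rw [hr, ← hFb, ← EReal.coe_neg, ← EReal.coe_neg, ← EReal.coe_add, ← EReal.coe_add,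
      EReal.coe_le_coe_iff] at h2
    exact h2
  -- strong concavity estimate, with slack t
  have hstrong : ∀ t : ℝ, 0 < t → t < 1 →
      (-Fs + (-⟪A xs - b, y⟫ - βx / 2 * ‖xs - x‖ ^ 2)) + βx / 2 * ‖xs - xb‖ ^ 2
        ≤ (-Fb + (-⟪A xb - b, y⟫ - βx / 2 * ‖xb - x‖ ^ 2)) + βx / 2 * ‖xs - xb‖ ^ 2 * t := by
    intro t ht0 ht1
    set xt := t • xs + (1 - t) • xb with hxt
    have hconv := hf_conv xs xb t ht0.le ht1.le
    rw [← hFs, ← hFb, ← EReal.coe_mul, ← EReal.coe_mul, ← EReal.coe_add] at hconv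
    have hxt_ne_top : f xt ≠ ⊤ := ne_top_of_le_ne_top (EReal.coe_ne_top _) hconv
    set Ft : ℝ := (f xt).toReal with hFtdef
    have hFt : (Ft : EReal) = f xt := EReal.coe_toReal hxt_ne_top (hfbot xt)
    have hFt_le : Ft ≤ t * Fs + (1 - t) * Fb := by
      rw [← hFt] at hconv; exact EReal.coe_le_coe_iff.mp hconv
    have hk := key xt Ft hFt.symm
    have hAeq : A xt - b = t • (A xs - b) + (1 - t) • (A xb - b) := by
      rw [hxt, map_add, map_smul, map_smul, smul_sub, smul_sub]; module
    have hA : ⟪A xt - b, y⟫ = t * ⟪A xs - b, y⟫ + (1 - t) * ⟪A xb - b, y⟫ := by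
      rw [hAeq, inner_add_left, real_inner_smul_left, real_inner_smul_left]
    have hN : ‖xt - x‖ ^ 2
        = t * ‖xs - x‖ ^ 2 + (1 - t) * ‖xb - x‖ ^ 2 - t * (1 - t) * ‖xs - xb‖ ^ 2 :=
      norm_combo_sq xs xb x t
    rw [hA, hN] at hk
    have htt : t * ((-Fs + (-⟪A xs - b, y⟫ - βx / 2 * ‖xs - x‖ ^ 2))
          + βx / 2 * ‖xs - xb‖ ^ 2)
        ≤ t * ((-Fb + (-⟪A xb - b, y⟫ - βx / 2 * ‖xb - x‖ ^ 2))
          + βx / 2 * ‖xs - xb‖ ^ 2 * t) := by nlinarith [hk, hFt_le]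
    exact le_of_mul_le_mul_left htt ht0
  -- pass to the limit t → 0
  have hstrong1 : (-Fs + (-⟪A xs - b, y⟫ - βx / 2 * ‖xs - x‖ ^ 2)) + βx / 2 * ‖xs - xb‖ ^ 2
      ≤ -Fb + (-⟪A xb - b, y⟫ - βx / 2 * ‖xb - x‖ ^ 2) := by
    set Ps := -Fs + (-⟪A xs - b, y⟫ - βx / 2 * ‖xs - x‖ ^ 2) with hPs
    set Pb := -Fb + (-⟪A xb - b, y⟫ - βx / 2 * ‖xb - x‖ ^ 2) with hPb
    set c : ℝ := βx / 2 * ‖xs - xb‖ ^ 2 with hc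
    have hc0 : 0 ≤ c := by positivity
    by_contra hcon
    push_neg at hcon
    set δ : ℝ := Ps + c - Pb with hδdef
    have hδ : 0 < δ := by simp only [hδdef]; linarith
    set t : ℝ := min (1 / 2) (δ / (2 * (c + 1))) with htdef
    have ht0 : 0 < t := lt_min (by norm_num) (by positivity)
    have ht1 : t < 1 := lt_of_le_of_lt (min_le_left _ _) (by norm_num)
    have h := hstrong t ht0 ht1
    have hct : c * t ≤ c * (δ / (2 * (c + 1))) :=
      mul_le_mul_of_nonneg_left (min_le_right _ _) hc0
    have h2 : c * (δ / (2 * (c + 1))) < δ := by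
      rw [mul_comm, div_mul_eq_mul_div, div_lt_iff₀ (by positivity : (0:ℝ) < 2 * (c + 1))]
      nlinarith
    linarith
  -- saddle inequality in y
  have hs1 : ⟪A xs - b, y⟫ ≤ ⟪A xs - b, ys⟫ := by
    have h := (hsaddle xs y).1
    rw [Lag, Lag, ← hFs, ← EReal.coe_add, ← EReal.coe_add, EReal.coe_le_coe_iff] at h
    linarith
  -- evaluate the supremum at (xb, ys)
  rw [smoothedGap]
  refine le_trans ?_ (le_iSup _ ((xb, ys) : X × Y))
  simp only [Lag]
  rw [← hFs, ← hFb, ← EReal.coe_add, ← EReal.coe_add]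
  rw [show ((Fs + ⟪A xs - b, ys⟫ : ℝ) : EReal) - ((Fb + ⟪A xb - b, y⟫ : ℝ) : EReal)
        - ((βx / 2 * ‖xb - x‖ ^ 2 + βy / 2 * ‖ys - ys‖ ^ 2 : ℝ) : EReal)
      = (((Fs + ⟪A xs - b, ys⟫) - (Fb + ⟪A xb - b, y⟫)
        - (βx / 2 * ‖xb - x‖ ^ 2 + βy / 2 * ‖ys - ys‖ ^ 2) : ℝ) : EReal) by
    rw [EReal.coe_sub, EReal.coe_sub]]
  rw [EReal.coe_le_coe_iff]
  have e1 : ‖x - xs‖ = ‖xs - x‖ := norm_sub_rev _ _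
  have e2 : ‖xb - xs‖ = ‖xs - xb‖ := norm_sub_rev _ _
  have e3 : ‖ys - ys‖ = 0 := by simp
  rw [e1, e2, e3]
  nlinarith [hstrong1, hs1]
end
end

section
/- Let β = (βx, βy) ∈ (0,∞)², let (x⋆, y⋆) be a saddle point of L, and let z = (x,y) ∈ X × Y with f(x) < +∞. Then the self-centered smoothed gap decomposes as G_β(z) = G_β((x, y⋆); (x⋆, y)) + G_β((x⋆, y); (x, y⋆)). -/
open scoped RealInnerProductSpace
open Filter Topology Metric

noncomputable section

variable {X Y : Type*} [NormedAddCommGroup X] [InnerProductSpace ℝ X]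
  [NormedAddCommGroup Y] [InnerProductSpace ℝ Y]

/-- decomposition of the self-centered smoothed gap.
If `(x⋆, y⋆)` is a saddle point of `L` and `f(x) < +∞`, then
`G_β(z) = G_β((x, y⋆); (x⋆, y)) + G_β((x⋆, y); (x, y⋆))`. -/
theorem smoothedGap_decomposition
    [FiniteDimensional ℝ X] [FiniteDimensional ℝ Y]
    (f : X → EReal) (A : X →L[ℝ] Y) (b : Y)
    (hf_proper : EProper f) (hf_lsc : LowerSemicontinuous f) (hf_conv : EConvexOn f)
    (βx βy : ℝ) (hβx : 0 < βx) (hβy : 0 < βy)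
    (xs : X) (ys : Y) (hsaddle : IsSaddle f A b xs ys)
    (x : X) (y : Y) (hfx : f x < ⊤) :
    smoothedGap f A b βx βy x y x y
      = smoothedGap f A b βx βy x ys xs y + smoothedGap f A b βx βy xs y x ys := by
  classical
  obtain ⟨hbot, u0, hu0⟩ := hf_proper
  obtain ⟨fx, hfxv⟩ : ∃ r : ℝ, f x = (r : EReal) :=
    ⟨(f x).toReal, (EReal.coe_toReal hfx.ne (hbot x)).symm⟩
  obtain ⟨fu0, hfu0v⟩ : ∃ r : ℝ, f u0 = (r : EReal) :=
    ⟨(f u0).toReal, (EReal.coe_toReal hu0 (hbot u0)).symm⟩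
  -- f xs is finite
  have hxs_top : f xs ≠ ⊤ := by
    intro h
    have h2 := (hsaddle u0 ys).2
    rw [Lag, Lag, h, hfu0v, EReal.top_add_coe, ← EReal.coe_add] at h2
    exact (EReal.coe_lt_top _).not_ge (le_of_eq (top_le_iff.mp h2).symm)
  obtain ⟨fxs, hfxsv⟩ : ∃ r : ℝ, f xs = (r : EReal) :=
    ⟨(f xs).toReal, (EReal.coe_toReal hxs_top (hbot xs)).symm⟩
  -- A xs = b
  have hA : A xs - b = 0 := by
    have h1 := (hsaddle x (ys + (A xs - b))).1
    rw [Lag, Lag, hfxsv, ← EReal.coe_add, ← EReal.coe_add, EReal.coe_le_coe_iff] at h1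
    rw [inner_add_right] at h1
    exact real_inner_self_nonpos.mp (by linarith)
  -- saddle inequality: f xs ≤ f x' + ⟪A x' - b, ys⟫
  have hK2 : ∀ (r : ℝ) (x' : X), f x' = (r : EReal) → fxs ≤ r + ⟪A x' - b, ys⟫ := by
    intro r x' hr
    have h2 := (hsaddle x' ys).2
    rw [Lag, Lag, hfxsv, hr, hA, inner_zero_left, ← EReal.coe_add, ← EReal.coe_add,
      EReal.coe_le_coe_iff] at h2
    linarith
  rw [smoothedGap, smoothedGap, smoothedGap]
  set φ : X × Y → EReal := fun w =>
    Lag f A b x w.2 - Lag f A b w.1 y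
      - ((βx / 2 * ‖w.1 - x‖ ^ 2 + βy / 2 * ‖w.2 - y‖ ^ 2 : ℝ) : EReal) with hφ
  set φ1 : X × Y → EReal := fun w =>
    Lag f A b x w.2 - Lag f A b w.1 ys
      - ((βx / 2 * ‖w.1 - xs‖ ^ 2 + βy / 2 * ‖w.2 - y‖ ^ 2 : ℝ) : EReal) with hφ1
  set φ2 : X × Y → EReal := fun w =>
    Lag f A b xs w.2 - Lag f A b w.1 y
      - ((βx / 2 * ‖w.1 - x‖ ^ 2 + βy / 2 * ‖w.2 - ys‖ ^ 2 : ℝ) : EReal) with hφ2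
  apply le_antisymm
  · refine iSup_le fun w => ?_
    have key : φ w ≤ φ1 (xs, w.2) + φ2 (w.1, ys) := by
      rcases eq_or_ne (f w.1) ⊤ with hw | hw
      · have hbotφ : φ w = ⊥ := by
          simp only [hφ, Lag, hw, EReal.top_add_coe, EReal.sub_top, EReal.bot_sub]
        rw [hbotφ]; exact bot_le
      obtain ⟨r, hr⟩ : ∃ r : ℝ, f w.1 = (r : EReal) :=
        ⟨(f w.1).toReal, (EReal.coe_toReal hw (hbot w.1)).symm⟩
      simp only [hφ, hφ1, hφ2, Lag, hr, hfxv, hfxsv, hA, inner_zero_left, sub_self,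
        norm_zero, ← EReal.coe_add, ← EReal.coe_sub, EReal.coe_le_coe_iff]
      ring_nf
      nlinarith [sq_nonneg (‖w.1 - xs‖), mul_nonneg hβx.le (sq_nonneg ‖w.1 - xs‖)]
    exact key.trans (add_le_add (le_iSup φ1 (xs, w.2)) (le_iSup φ2 (w.1, ys)))
  · refine EReal.add_le_of_forall_lt fun a ha b' hb' => ?_
    rw [lt_iSup_iff] at ha hb'
    obtain ⟨w1, hw1⟩ := ha
    obtain ⟨w2, hw2⟩ := hb'
    have key : φ1 w1 + φ2 w2 ≤ φ (w2.1, w1.2) := by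
      rcases eq_or_ne (f w1.1) ⊤ with hv1 | hv1
      · have : φ1 w1 = ⊥ := by
          simp only [hφ1, Lag, hv1, EReal.top_add_coe, EReal.sub_top, EReal.bot_sub]
        rw [this, EReal.bot_add]; exact bot_le
      rcases eq_or_ne (f w2.1) ⊤ with hv2 | hv2
      · have : φ2 w2 = ⊥ := by
          simp only [hφ2, Lag, hv2, EReal.top_add_coe, EReal.sub_top, EReal.bot_sub]
        rw [this, EReal.add_bot]; exact bot_le
      obtain ⟨r1, hr1⟩ : ∃ r : ℝ, f w1.1 = (r : EReal) :=
        ⟨(f w1.1).toReal, (EReal.coe_toReal hv1 (hbot w1.1)).symm⟩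
      obtain ⟨r2, hr2⟩ : ∃ r : ℝ, f w2.1 = (r : EReal) :=
        ⟨(f w2.1).toReal, (EReal.coe_toReal hv2 (hbot w2.1)).symm⟩
      have hK := hK2 r1 w1.1 hr1
      simp only [hφ, hφ1, hφ2, Lag, hr1, hr2, hfxv, hfxsv, hA, inner_zero_left,
        ← EReal.coe_add, ← EReal.coe_sub, EReal.coe_le_coe_iff]
      nlinarith [mul_nonneg hβx.le (sq_nonneg ‖w1.1 - xs‖),
        mul_nonneg hβy.le (sq_nonneg ‖w2.2 - ys‖)]
    calc a + b' ≤ φ1 w1 + φ2 w2 := add_le_add hw1.le hw2.le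
      _ ≤ φ (w2.1, w1.2) := key
      _ ≤ ⨆ w, φ w := le_iSup φ (w2.1, w1.2)
end
end

section
/- Assume the set of saddle points Z⋆ is nonempty and that the subdifferential of the Lagrangian is metrically sub-regular with constant γ > 0, i.e., for all (x,y) ∈ X × Y and all q ∈ ∂f(x), ‖q + Aᵀy‖ + ‖Ax − b‖ ≥ γ (dist(x, X⋆) + dist(y, Y⋆)). Then for every z = (x,y) ∈ X × Y and every q ∈ ∂f(x), setting K = ‖q + Aᵀy‖² + ‖Ax − b‖², the optimality gap satisfies f(x) − f⋆ ≤ (2/γ) K + ‖y‖ √K. -/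
open scoped RealInnerProductSpace
open Filter Topology Metric

noncomputable section

variable {X Y : Type*} [NormedAddCommGroup X] [InnerProductSpace ℝ X]
  [NormedAddCommGroup Y] [InnerProductSpace ℝ Y]

lemma saddle_Aeq_and_ne_top (f : X → EReal) (A : X →L[ℝ] Y) (b : Y)
    (hf_proper : EProper f) (xs : X) (ys : Y) (h : IsSaddle f A b xs ys) :
    A xs = b ∧ f xs ≠ ⊤ := by
  obtain ⟨u, hu⟩ := hf_proper.2
  have hne : f xs ≠ ⊤ := by
    intro htop
    have h2 := (h u ys).2
    unfold Lag at h2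
    rw [htop, EReal.top_add_coe] at h2
    have : f u + ((⟪A u - b, ys⟫ : ℝ) : EReal) ≠ ⊤ :=
      (EReal.add_lt_top hu (EReal.coe_ne_top _)).ne
    exact this (top_le_iff.mp h2)
  refine ⟨?_, hne⟩
  set r := (f xs).toReal with hr
  have hfr : f xs = (r : EReal) := (EReal.coe_toReal hne (hf_proper.1 xs)).symm
  have h1 := (h xs (ys + (A xs - b))).1
  unfold Lag at h1
  rw [hfr, ← EReal.coe_add, ← EReal.coe_add, EReal.coe_le_coe_iff] at h1
  rw [inner_add_right, real_inner_self_eq_norm_sq] at h1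
  have : ‖A xs - b‖ = 0 := by nlinarith [sq_nonneg ‖A xs - b‖]
  exact sub_eq_zero.mp (norm_eq_zero.mp this)

/-- optimality-gap bound from the KKT error under metric sub-regularity.
Assume the saddle-point set is nonempty (witnessed by `(xs, ys)`) and the subdifferential of
the Lagrangian is metrically sub-regular with constant `γ > 0`. Then for every `z = (x, y)`
and every `q ∈ ∂f(x)`, with `K = ‖q + Aᵀy‖² + ‖Ax − b‖²`, one has
`f(x) − f⋆ ≤ (2/γ) K + ‖y‖ √K`. -/
theorem optimality_gap_le_KKT
    [FiniteDimensional ℝ X] [FiniteDimensional ℝ Y]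
    (f : X → EReal) (A : X →L[ℝ] Y) (At : Y →L[ℝ] X) (b : Y)
    (hf_proper : EProper f) (hf_lsc : LowerSemicontinuous f) (hf_conv : EConvexOn f)
    (hAt : ∀ (u : X) (v : Y), ⟪A u, v⟫ = ⟪u, At v⟫)
    (xs : X) (ys : Y) (hsaddle : IsSaddle f A b xs ys)
    (γ : ℝ) (hγ : 0 < γ)
    (hMSR : ∀ (x' : X) (y' : Y) (q : X), q ∈ ESubdiff f x' →
      γ * (infDist x' (Prod.fst '' saddleSet f A b)
            + infDist y' (Prod.snd '' saddleSet f A b))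
        ≤ ‖q + At y'‖ + ‖A x' - b‖)
    (x : X) (y : Y) (q : X) (hq : q ∈ ESubdiff f x) :
    f x - f xs
      ≤ ((2 / γ * (‖q + At y‖ ^ 2 + ‖A x - b‖ ^ 2)
          + ‖y‖ * Real.sqrt (‖q + At y‖ ^ 2 + ‖A x - b‖ ^ 2) : ℝ) : EReal) := by
  classical
  obtain ⟨hAxs, hfxs_ne⟩ := saddle_Aeq_and_ne_top f A b hf_proper xs ys hsaddle
  set fs := (f xs).toReal with hfs_def
  have hfxs : f xs = (fs : EReal) := (EReal.coe_toReal hfxs_ne (hf_proper.1 xs)).symm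
  -- f x is finite
  have hq_xs := hq xs
  have hfx_ne : f x ≠ ⊤ := by
    intro htop
    rw [htop, EReal.top_add_coe, hfxs, top_le_iff] at hq_xs
    exact EReal.coe_ne_top fs hq_xs
  set fx := (f x).toReal with hfx_def
  have hfx : f x = (fx : EReal) := (EReal.coe_toReal hfx_ne (hf_proper.1 x)).symm
  set a := ‖q + At y‖ with ha_def
  set c := ‖A x - b‖ with hc_def
  set S : Set X := Prod.fst '' saddleSet f A b with hS_def
  have hSne : S.Nonempty := ⟨xs, ⟨(xs, ys), hsaddle, rfl⟩⟩
  have ha0 : 0 ≤ a := norm_nonneg _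
  have hc0 : 0 ≤ c := norm_nonneg _
  -- key pointwise bound
  have key : ∀ xs' ∈ S, fx - fs ≤ a * ‖x - xs'‖ + c * ‖y‖ := by
    intro xs' hxs'
    obtain ⟨zs', hzs', hfst⟩ := hxs'
    obtain ⟨hAzs', hfzs'_ne⟩ := saddle_Aeq_and_ne_top f A b hf_proper zs'.1 zs'.2 hzs'
    -- f xs' ≤ fs
    have hval : f xs' ≤ (fs : EReal) := by
      have h2 := (hzs' xs zs'.2).2
      unfold Lag at h2
      rw [← hfst] at *
      rw [hAzs', hAxs, sub_self] at h2
      simpa [hfxs] using h2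
    -- subgradient inequality
    have hsub := hq xs'
    have hsub' : fx + ⟪q, xs' - x⟫ ≤ fs := by
      rw [hfx] at hsub
      have := le_trans hsub hval
      rw [← EReal.coe_add, EReal.coe_le_coe_iff] at this
      exact this
    -- rewrite the inner product
    have hAzs'' : A xs' = b := by rw [← hfst]; exact hAzs'
    have hinner : ⟪q, x - xs'⟫ = ⟪q + At y, x - xs'⟫ - ⟪A x - b, y⟫ := by
      have h1 : ⟪A (x - xs'), y⟫ = ⟪x - xs', At y⟫ := hAt _ _
      rw [map_sub, hAzs''] at h1
      rw [inner_add_left, h1]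
      linarith [real_inner_comm (x - xs') (At y)]
    have hCS1 : ⟪q + At y, x - xs'⟫ ≤ a * ‖x - xs'‖ := real_inner_le_norm _ _
    have hCS2 : -⟪A x - b, y⟫ ≤ c * ‖y‖ := by
      have := real_inner_le_norm (A x - b) (-y)
      simpa [inner_neg_right] using this
    have : ⟪q, xs' - x⟫ = -⟪q, x - xs'⟫ := by
      rw [← inner_neg_right]; congr 1; abel
    rw [this] at hsub'
    rw [hinner] at hsub'
    linarith
  -- pass to infDist
  set D := infDist x S with hD_def
  have hD0 : 0 ≤ D := infDist_nonneg
  have hinf : fx - fs ≤ a * D + c * ‖y‖ := by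
    have hstep : ∀ ε > (0:ℝ), fx - fs ≤ a * D + c * ‖y‖ + ε := by
      intro ε hε
      have hlt : infDist x S < D + ε / (a + 1) := by
        have : 0 < ε / (a + 1) := div_pos hε (by linarith)
        linarith
      obtain ⟨xs', hxs', hd⟩ := (infDist_lt_iff hSne).1 hlt
      have hk := key xs' hxs'
      have : ‖x - xs'‖ = dist x xs' := (dist_eq_norm x xs').symm
      rw [this] at hk
      have h1 : a * dist x xs' ≤ a * (D + ε / (a + 1)) :=
        mul_le_mul_of_nonneg_left (le_of_lt hd) ha0
      have h2 : a * (ε / (a + 1)) ≤ ε := by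
        rw [mul_div_assoc']
        rw [div_le_iff₀ (by linarith : (0:ℝ) < a + 1)]
        nlinarith
      nlinarith
    by_contra hcon
    push_neg at hcon
    have := hstep ((fx - fs - (a * D + c * ‖y‖)) / 2) (by linarith)
    linarith
  -- metric sub-regularity
  have hmsr := hMSR x y q hq
  have hDy0 : (0:ℝ) ≤ infDist y (Prod.snd '' saddleSet f A b) := infDist_nonneg
  have hγD : γ * D ≤ a + c := by
    have : γ * D ≤ γ * (D + infDist y (Prod.snd '' saddleSet f A b)) := by nlinarith
    exact le_trans this hmsr
  -- final arithmetic
  set s := Real.sqrt (a ^ 2 + c ^ 2) with hs_def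
  have hs0 : 0 ≤ s := Real.sqrt_nonneg _
  have hcs : c ≤ s := by
    have hs2 : s ^ 2 = a ^ 2 + c ^ 2 := Real.sq_sqrt (by positivity)
    nlinarith [sq_nonneg a]
  have haD : a * D ≤ 2 / γ * (a ^ 2 + c ^ 2) := by
    have h1 : a * (γ * D) ≤ a * (a + c) := mul_le_mul_of_nonneg_left hγD ha0
    rw [div_mul_eq_mul_div, le_div_iff₀ hγ]
    nlinarith [sq_nonneg (a - c), sq_nonneg a, sq_nonneg c]
  have hfinal : fx - fs ≤ 2 / γ * (a ^ 2 + c ^ 2) + ‖y‖ * s := by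
    have : c * ‖y‖ ≤ s * ‖y‖ := mul_le_mul_of_nonneg_right hcs (norm_nonneg y)
    nlinarith
  rw [hfx, hfxs, ← EReal.coe_sub]
  exact_mod_cast hfinal
end
end

section
/- Let β = (βx, βy) ∈ (0,∞)², assume the set of saddle points Z⋆ is nonempty, and assume the smoothed gap has a quadratic error bound with constant η > 0: G_β(z') ≥ (η/2) dist(z', Z⋆)² for all z' ∈ X × Y. Then for every z = (x,y) ∈ X × Y with f(x) < +∞, the optimality gap satisfies f(x) − f⋆ ≤ (1 + 2√(βx/η)) G_β(z) + √(2 βy) ‖y‖ √(G_β(z)). -/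
open scoped RealInnerProductSpace
open Filter Topology Metric

noncomputable section

variable {X Y : Type*} [NormedAddCommGroup X] [InnerProductSpace ℝ X]
  [NormedAddCommGroup Y] [InnerProductSpace ℝ Y]

/-!
For a feasible `x⋆` and `t ∈ [0, 1]`, test the smoothed gap at `x' = x + t (x⋆ - x)` and at
the maximizing dual point `y' = y + (A x - b) / βy`. Convexity of `f` and `A x⋆ = b` give
`t (f x - f x⋆) ≤ G + βx t² ‖x - x⋆‖² / 2 + t √(2 βy G) ‖y‖`, where `‖A x - b‖ ≤ √(2 βy G)`
is the case `t = 0`. Optimizing in `t` yields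
`f x - f x⋆ ≤ G + √(2 βx G) ‖x - x⋆‖ + √(2 βy G) ‖y‖`. All saddle points are feasible with
the same value, so `‖x - x⋆‖` may be replaced by `dist(z, Z⋆) ≤ √(2 G / η)`.
-/

section

variable {f : X → EReal} {A : X →L[ℝ] Y} {b : Y}

lemma Lag_of_map_eq {x : X} (hx : A x = b) (y : Y) : Lag f A b x y = f x := by
  simp [Lag, hx]

namespace IsSaddle

variable {xs : X} {ys : Y}

lemma apply_ne_top (hs : IsSaddle f A b xs ys) {u : X} (hu : f u ≠ ⊤) : f xs ≠ ⊤ := by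
  intro htop
  have h := (hs u ys).2
  rw [Lag, Lag, htop, EReal.top_add_coe, top_le_iff] at h
  exact EReal.add_ne_top hu (EReal.coe_ne_top _) h

/-- `ys` maximizes the linear functional `⟪A xs - b, ·⟫`, which is therefore zero. -/
lemma map_eq (hs : IsSaddle f A b xs ys) (hbot : f xs ≠ ⊥) (htop : f xs ≠ ⊤) : A xs = b := by
  have hmax : ∀ y', ⟪A xs - b, y'⟫ ≤ ⟪A xs - b, ys⟫ := fun y' => by
    have h := (hs xs y').1
    rw [Lag, Lag, ← EReal.coe_toReal htop hbot, ← EReal.coe_add, ← EReal.coe_add,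
      EReal.coe_le_coe_iff] at h
    linarith
  have h := hmax (ys + (A xs - b))
  rw [inner_add_right, real_inner_self_eq_norm_sq] at h
  rw [← sub_eq_zero, ← norm_eq_zero]
  nlinarith [norm_nonneg (A xs - b)]

lemma apply_eq {x' : X} {y' : Y} (hs : IsSaddle f A b xs ys) (hs' : IsSaddle f A b x' y')
    (hA : A xs = b) (hA' : A x' = b) : f xs = f x' := by
  have h := (hs x' ys).2
  have h' := (hs' xs y').2
  rw [Lag_of_map_eq hA, Lag_of_map_eq hA'] at h h'
  exact le_antisymm h h'

end IsSaddle

/-- Take `t = a' / (a' + s)` for `a' > a`, then let `a' → a`. -/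
lemma le_sq_add_two_mul_add_of_forall_mul_le {V a s C : ℝ} (ha : 0 ≤ a) (hs : 0 ≤ s)
    (h : ∀ t, 0 < t → t ≤ 1 → t * V ≤ a ^ 2 + s ^ 2 * t ^ 2 + t * C) :
    V ≤ a ^ 2 + 2 * a * s + C := by
  have hpos : ∀ a', a < a' → V ≤ a' ^ 2 + 2 * a' * s + C := by
    intro a' haa'
    have ha' : 0 < a' := ha.trans_lt haa'
    have hsum : 0 < a' + s := by positivity
    set t := a' / (a' + s)
    have ht0 : 0 < t := by positivity
    have htt : t * (a' + s) = a' := div_mul_cancel₀ _ hsum.ne'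
    have hV := h t ht0 (div_le_one_of_le₀ (by linarith) hsum.le)
    have hsq : a ^ 2 ≤ t * (a' * (a' + s)) := by nlinarith
    have hst : s * t ≤ a' := by nlinarith
    have hVt : t * V ≤ t * (a' * (a' + s) + s * (s * t) + C) := by nlinarith
    have := le_of_mul_le_mul_left hVt ht0
    nlinarith [mul_le_mul_of_nonneg_left hst hs]
  have hcont : ContinuousWithinAt (fun a' => a' ^ 2 + 2 * a' * s + C) (Set.Ioi a) a := by
    fun_prop
  exact ge_of_tendsto hcont (eventually_nhdsWithin_of_forall fun a' ha' => hpos a' ha')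

variable {βx βy : ℝ} {x : X} {y : Y}

/-- The lower bound obtained from the test point `(x', y + (A x - b) / βy)`, whose dual
component maximizes the concave part of the smoothed gap in `y'`. -/
lemma le_smoothedGap_of_primal (hβy : 0 < βy) {F p : ℝ} (hx : f x = F) {x' : X}
    (hx' : f x' = p) :
    ((F - p + ⟪A (x - x'), y⟫ + ‖A x - b‖ ^ 2 / (2 * βy) - βx / 2 * ‖x' - x‖ ^ 2 : ℝ) : EReal)
      ≤ smoothedGap f A b βx βy x y x y := by
  refine le_trans (le_of_eq ?_) (le_iSup (fun w : X × Y => Lag f A b x w.2 - Lag f A b w.1 y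
    - ((βx / 2 * ‖w.1 - x‖ ^ 2 + βy / 2 * ‖w.2 - y‖ ^ 2 : ℝ) : EReal))
    (x', y + βy⁻¹ • (A x - b)))
  have hlin : ⟪A (x - x'), y⟫ = ⟪A x - b, y⟫ - ⟪A x' - b, y⟫ := by
    rw [← inner_sub_left, map_sub, sub_sub_sub_cancel_right]
  simp only [Lag, hx, hx', hlin, add_sub_cancel_left, norm_smul, inner_add_right,
    real_inner_smul_right, real_inner_self_eq_norm_sq]
  norm_cast
  rw [Real.norm_of_nonneg (inv_nonneg.2 hβy.le)]
  field_simp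
  ring

variable {g : ℝ}

lemma sq_norm_sub_le_of_smoothedGap_le (hβy : 0 < βy) {F : ℝ} (hx : f x = F)
    (hg : smoothedGap f A b βx βy x y x y ≤ g) : ‖A x - b‖ ^ 2 ≤ 2 * βy * g := by
  have h := EReal.coe_le_coe_iff.1 ((le_smoothedGap_of_primal hβy hx hx).trans hg)
  have h' : ‖A x - b‖ ^ 2 / (2 * βy) ≤ g := by simpa using h
  rwa [div_le_iff₀ (by positivity), mul_comm] at h'

lemma nonneg_of_smoothedGap_le (hβy : 0 < βy) {F : ℝ} (hx : f x = F)
    (hg : smoothedGap f A b βx βy x y x y ≤ g) : 0 ≤ g := by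
  nlinarith [sq_norm_sub_le_of_smoothedGap_le hβy hx hg, sq_nonneg ‖A x - b‖]

lemma mul_sub_le_of_smoothedGap_le (hbot : ∀ u, f u ≠ ⊥) (hconv : EConvexOn f)
    (hβy : 0 < βy) {F Fs : ℝ} (hx : f x = F) {xs : X} (hxs : f xs = Fs) (hA : A xs = b)
    (hg : smoothedGap f A b βx βy x y x y ≤ g) {t : ℝ} (ht0 : 0 ≤ t) (ht1 : t ≤ 1) :
    t * (F - Fs) ≤ g + βx / 2 * (t * ‖x - xs‖) ^ 2 + t * (√(2 * βy) * ‖y‖ * √g) := by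
  set x' := t • xs + (1 - t) • x
  have hcv : f x' ≤ ((t * Fs + (1 - t) * F : ℝ) : EReal) := by
    simpa [hx, hxs] using hconv xs x t ht0 ht1
  have hp : f x' = ((f x').toReal : EReal) :=
    (EReal.coe_toReal (ne_top_of_le_ne_top (EReal.coe_ne_top _) hcv) (hbot x')).symm
  have hple : (f x').toReal ≤ t * Fs + (1 - t) * F := by rwa [hp, EReal.coe_le_coe_iff] at hcv
  have hgap := EReal.coe_le_coe_iff.1 ((le_smoothedGap_of_primal hβy hx hp).trans hg)
  have hdx : x - x' = t • (x - xs) := by module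
  rw [hdx, norm_sub_rev x', hdx, map_smul, map_sub, hA, real_inner_smul_left, norm_smul,
    Real.norm_of_nonneg ht0] at hgap
  have hres : ‖A x - b‖ ≤ √(2 * βy) * √g := by
    have hsq := sq_norm_sub_le_of_smoothedGap_le hβy hx hg
    rwa [← Real.sqrt_mul (by positivity), Real.le_sqrt (norm_nonneg _) ((sq_nonneg _).trans hsq)]
  have hcs : -⟪A x - b, y⟫ ≤ ‖A x - b‖ * ‖y‖ := (neg_le_abs _).trans (abs_real_inner_le_norm _ _)
  have hres_y := mul_le_mul_of_nonneg_right hres (norm_nonneg y)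
  have hnn : 0 ≤ ‖A x - b‖ ^ 2 / (2 * βy) := by positivity
  nlinarith [mul_le_mul_of_nonneg_left (hcs.trans hres_y) ht0]

lemma sub_le_of_smoothedGap_le (hbot : ∀ u, f u ≠ ⊥) (hconv : EConvexOn f) (hβx : 0 ≤ βx)
    (hβy : 0 < βy) {F Fs : ℝ} (hx : f x = F) {xs : X} (hxs : f xs = Fs) (hA : A xs = b)
    (hg : smoothedGap f A b βx βy x y x y ≤ g) :
    F - Fs ≤ g + 2 * √g * (√(βx / 2) * ‖x - xs‖) + √(2 * βy) * ‖y‖ * √g := by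
  have hg0 := nonneg_of_smoothedGap_le hβy hx hg
  have h := le_sq_add_two_mul_add_of_forall_mul_le (Real.sqrt_nonneg g)
    (by positivity : 0 ≤ √(βx / 2) * ‖x - xs‖) (V := F - Fs)
    (C := √(2 * βy) * ‖y‖ * √g) fun t ht0 ht1 => by
      rw [Real.sq_sqrt hg0, mul_pow, Real.sq_sqrt (by positivity)]
      linarith [mul_sub_le_of_smoothedGap_le hbot hconv hβy hx hxs hA hg ht0.le ht1]
  rwa [Real.sq_sqrt hg0] at h

end

omit [InnerProductSpace ℝ X] [InnerProductSpace ℝ Y] in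
lemma distZ_nonneg (z : X × Y) (S : Set (X × Y)) : 0 ≤ distZ z S :=
  Real.iInf_nonneg fun _ => Real.sqrt_nonneg _

omit [InnerProductSpace ℝ X] [InnerProductSpace ℝ Y] in
lemma le_mul_distZ {S : Set (X × Y)} (hS : S.Nonempty) (z : X × Y) {a c : ℝ} (hc : 0 ≤ c)
    (h : ∀ w ∈ S, a ≤ c * ‖z.1 - w.1‖) : a ≤ c * distZ z S := by
  have := hS.to_subtype
  rw [distZ, Real.mul_iInf_of_nonneg hc]
  refine le_ciInf fun w => (h w w.2).trans (mul_le_mul_of_nonneg_left ?_ hc)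
  exact Real.le_sqrt_of_sq_le (le_add_of_nonneg_right (sq_nonneg _))

theorem optimality_gap_le_smoothedGap_general
    (f : X → EReal) (A : X →L[ℝ] Y) (b : Y)
    (hf_proper : EProper f) (hf_conv : EConvexOn f)
    (βx βy : ℝ) (hβx : 0 < βx) (hβy : 0 < βy)
    (xs : X) (ys : Y) (hsaddle : IsSaddle f A b xs ys)
    (η : ℝ) (hη : 0 < η)
    (hQEB : ∀ z' : X × Y,
      ((η / 2 * (distZ z' (saddleSet f A b)) ^ 2 : ℝ) : EReal)
        ≤ smoothedGap f A b βx βy z'.1 z'.2 z'.1 z'.2)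
    (x : X) (y : Y) (hfx : f x < ⊤)
    (g : ℝ) (hg : smoothedGap f A b βx βy x y x y = (g : EReal)) :
    f x - f xs
      ≤ (((1 + 2 * Real.sqrt (βx / η)) * g
          + Real.sqrt (2 * βy) * ‖y‖ * Real.sqrt g : ℝ) : EReal) := by
  have hbot := hf_proper.1
  have hxs_top := hsaddle.apply_ne_top hfx.ne
  have hxsA := hsaddle.map_eq (hbot xs) hxs_top
  have hF := (EReal.coe_toReal hfx.ne (hbot x)).symm
  have hFs := (EReal.coe_toReal hxs_top (hbot xs)).symm
  have hg0 := nonneg_of_smoothedGap_le hβy hF hg.le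
  have hopt : ∀ w ∈ saddleSet f A b, (f x).toReal - (f xs).toReal - g
      - √(2 * βy) * ‖y‖ * √g ≤ 2 * √g * √(βx / 2) * ‖x - w.1‖ := by
    intro w hw
    have hwA := hw.map_eq (hbot _) (hw.apply_ne_top hfx.ne)
    have hfw : f w.1 = (f xs).toReal := (hw.apply_eq hsaddle hwA hxsA).trans hFs
    linarith [sub_le_of_smoothedGap_le hbot hf_conv hβx.le hβy hF hfw hwA hg.le]
  have hdist := le_mul_distZ ⟨(xs, ys), hsaddle⟩ (x, y) (by positivity) hopt
  have hd : distZ (x, y) (saddleSet f A b) ≤ √(2 * g / η) := by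
    have h := hQEB (x, y)
    rw [hg, EReal.coe_le_coe_iff] at h
    rw [Real.le_sqrt (distZ_nonneg _ _) (by positivity), le_div_iff₀ hη]
    linarith
  have hprod : √g * √(βx / 2) * √(2 * g / η) = g * √(βx / η) := by
    rw [← Real.sqrt_mul hg0, ← Real.sqrt_mul (by positivity),
      show g * (βx / 2) * (2 * g / η) = g ^ 2 * (βx / η) by field_simp,
      Real.sqrt_mul (sq_nonneg g), Real.sqrt_sq hg0]
  rw [hF, hFs, ← EReal.coe_sub, EReal.coe_le_coe_iff]
  nlinarith [mul_le_mul_of_nonneg_left hd (by positivity : 0 ≤ 2 * √g * √(βx / 2))]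

/-- optimality-gap bound from the smoothed gap under a quadratic error
bound. Assume the saddle-point set is nonempty (witnessed by `(xs, ys)`) and the smoothed
gap has a quadratic error bound with constant `η > 0`.  Then for every `z = (x, y)` with
`f(x) < +∞`, `f(x) − f⋆ ≤ (1 + 2√(βx/η)) G_β(z) + √(2βy) ‖y‖ √(G_β(z))`
(the value `g` of the self-centered smoothed gap, finite under the standing assumptions,
is given by `hg`). -/
theorem optimality_gap_le_smoothedGap
    [FiniteDimensional ℝ X] [FiniteDimensional ℝ Y]
    (f : X → EReal) (A : X →L[ℝ] Y) (b : Y)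
    (hf_proper : EProper f) (hf_lsc : LowerSemicontinuous f) (hf_conv : EConvexOn f)
    (βx βy : ℝ) (hβx : 0 < βx) (hβy : 0 < βy)
    (xs : X) (ys : Y) (hsaddle : IsSaddle f A b xs ys)
    (η : ℝ) (hη : 0 < η)
    (hQEB : ∀ z' : X × Y,
      ((η / 2 * (distZ z' (saddleSet f A b)) ^ 2 : ℝ) : EReal)
        ≤ smoothedGap f A b βx βy z'.1 z'.2 z'.1 z'.2)
    (x : X) (y : Y) (hfx : f x < ⊤)
    (g : ℝ) (hg : smoothedGap f A b βx βy x y x y = (g : EReal)) :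
    f x - f xs
      ≤ (((1 + 2 * Real.sqrt (βx / η)) * g
          + Real.sqrt (2 * βy) * ‖y‖ * Real.sqrt g : ℝ) : EReal) :=
  optimality_gap_le_smoothedGap_general f A b hf_proper hf_conv βx βy hβx hβy xs ys hsaddle η hη
    hQEB x y hfx g hg
end
end

section
/- Let β = (βx, βy) ∈ (0,∞)² and β_min = min(βx, βy). Assume the set of saddle points Z⋆ is nonempty, that dom f* is nonempty and closed, and that the smoothed gap has a quadratic error bound with constant η > 0: G_β(z') ≥ (η/2) dist(z', Z⋆)² for all z' ∈ X × Y. Then for every z = (x,y) ∈ X × Y with f(x) < +∞, the optimality gap satisfies f(x) − f⋆ ≤ ( 1 + ‖x‖ + √(2/η) · √( (1 + ‖x‖ + ‖y‖) √(D(z)) + D(z)/(2 β_min) ) ) · √(D(z)). -/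
open scoped RealInnerProductSpace
open Filter Topology Metric

noncomputable section

variable {X Y : Type*} [NormedAddCommGroup X] [InnerProductSpace ℝ X]
  [NormedAddCommGroup Y] [InnerProductSpace ℝ Y]

/-!
By Fenchel–Young, `x' ↦ ⟪a + Aᵀy, x'⟫ - f*(a) - ⟪b, y⟫` is an affine minorant of `L(·, y)`; its
slope `a + Aᵀy`, its offset `f(x) + f*(a) + ⟪b, y⟫` and the primal residual `Ax - b` are bounded
by `√D`. Replacing `L(x', y)` by the minorant and absorbing the linear terms into the quadratic
penalties (Young's inequality) bounds the self-centred smoothed gap at `z` by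
`M = (1 + ‖x‖ + ‖y‖) √D + D / (2 β_min)`, so the error bound gives `dist(z, Z⋆) ≤ √(2/η) √M`.
At a saddle point `(x⋆, y⋆)`, which is feasible, the minorant gives
`f(x) - f⋆ ≤ √D (1 + ‖x⋆‖) ≤ √D (1 + ‖x‖ + ‖x - x⋆‖)`; take the infimum over `Z⋆`.
-/

section
variable {f : X → EReal} {A : X →L[ℝ] Y} {At : Y →L[ℝ] X} {b : Y}

theorem coe_inner_sub_le_of_fenchel_eq {a : X} {fa : ℝ} (hfa : fenchel f a = fa) (u : X) :
    ((⟪a, u⟫ - fa : ℝ) : EReal) ≤ f u := by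
  have h : ((⟪a, u⟫ : ℝ) : EReal) - f u ≤ fa :=
    hfa ▸ le_iSup (fun v => ((⟪a, v⟫ : ℝ) : EReal) - f v) u
  rw [EReal.sub_le_iff_le_add (.inr (EReal.coe_ne_top fa)) (.inr (EReal.coe_ne_bot fa))] at h
  exact EReal.sub_le_of_le_add' h

theorem coe_le_Lag (hAt : ∀ (u : X) (v : Y), ⟪A u, v⟫ = ⟪u, At v⟫) {a : X} {fa : ℝ}
    (hfa : fenchel f a = fa) (x' : X) (y : Y) :
    ((⟪a + At y, x'⟫ - fa - ⟪b, y⟫ : ℝ) : EReal) ≤ Lag f A b x' y := by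
  have h : ⟪a + At y, x'⟫ - fa - ⟪b, y⟫ = (⟪a, x'⟫ - fa) + ⟪A x' - b, y⟫ := by
    rw [inner_sub_left, hAt, inner_add_left, real_inner_comm (At y)]
    ring
  rw [h, EReal.coe_add]
  exact add_le_add (coe_inner_sub_le_of_fenchel_eq hfa x') le_rfl

theorem apply_ne_bot_of_fenchel_eq {a : X} {fa : ℝ} (hfa : fenchel f a = fa) (u : X) :
    f u ≠ ⊥ :=
  ne_bot_of_le_ne_bot (EReal.coe_ne_bot _) (coe_inner_sub_le_of_fenchel_eq hfa u)

theorem IsSaddle.apply_ne_top_s11 {xs : X} {ys : Y} (hs : IsSaddle f A b xs ys) {x : X}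
    (hx : f x ≠ ⊤) : f xs ≠ ⊤ := by
  intro htop
  have h := (hs x ys).2
  rw [Lag, htop, EReal.top_add_coe, top_le_iff] at h
  exact EReal.add_ne_top hx (EReal.coe_ne_top _) h

theorem IsSaddle.map_eq_s11 {xs : X} {ys : Y} (hs : IsSaddle f A b xs ys) (hbot : f xs ≠ ⊥)
    (htop : f xs ≠ ⊤) : A xs = b := by
  set r := A xs - b
  have h := (hs xs (ys + r)).1
  rw [Lag, Lag, ← EReal.coe_toReal htop hbot, ← EReal.coe_add, ← EReal.coe_add,
    EReal.coe_le_coe_iff, inner_add_right] at h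
  exact sub_eq_zero.mp (real_inner_self_nonpos.mp (by linarith))

theorem IsSaddle.apply_eq_s11 {x₁ x₂ : X} {y₁ y₂ : Y} (h₁ : IsSaddle f A b x₁ y₁)
    (h₂ : IsSaddle f A b x₂ y₂) (hx₁ : A x₁ = b) (hx₂ : A x₂ = b) : f x₁ = f x₂ := by
  have l₁ := (h₁ x₂ y₁).2
  have l₂ := (h₂ x₁ y₂).2
  simp only [Lag, hx₁, hx₂, sub_self, inner_zero_left, EReal.coe_zero, add_zero] at l₁ l₂
  exact le_antisymm l₁ l₂

end

theorem inner_sub_half_mul_norm_sq_le {β : ℝ} (hβ : 0 < β) (u v : X) :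
    ⟪u, v⟫ - β / 2 * ‖v‖ ^ 2 ≤ ‖u‖ ^ 2 / (2 * β) := by
  rw [le_div_iff₀ (by positivity)]
  nlinarith [real_inner_le_norm u v, sq_nonneg (β * ‖v‖ - ‖u‖)]

theorem add_inner_sub_inner_sub_le {βx βy : ℝ} (hβx : 0 < βx) (hβy : 0 < βy) (c : ℝ)
    (p x x' : X) (q y y' : Y) :
    c + ⟪q, y'⟫ - ⟪p, x'⟫ - (βx / 2 * ‖x' - x‖ ^ 2 + βy / 2 * ‖y' - y‖ ^ 2)
      ≤ |c| + ‖p‖ * ‖x‖ + ‖q‖ * ‖y‖ + ‖p‖ ^ 2 / (2 * βx) + ‖q‖ ^ 2 / (2 * βy) := by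
  have hx := inner_sub_half_mul_norm_sq_le hβx (-p) (x' - x)
  have hy := inner_sub_half_mul_norm_sq_le hβy q (y' - y)
  rw [norm_neg, inner_sub_right, inner_neg_left, inner_neg_left] at hx
  rw [inner_sub_right] at hy
  have hpx := real_inner_le_norm (-p) x
  rw [inner_neg_left, norm_neg] at hpx
  linarith [real_inner_le_norm q y, le_abs_self c]

theorem le_sqrt_mul_sqrt_of_half_mul_sq_le {η d M : ℝ} (hη : 0 < η) (h : η / 2 * d ^ 2 ≤ M) :
    d ≤ √(2 / η) * √M := by
  rw [← Real.sqrt_mul (by positivity)]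
  refine Real.le_sqrt_of_sq_le ?_
  rw [div_mul_eq_mul_div, le_div_iff₀ hη]
  linarith

section PDG
variable {A : X →L[ℝ] Y} {At : Y →L[ℝ] X} {b : Y} {fx fa : ℝ} {a x : X} {y : Y}

theorem abs_le_sqrt_PDG : |fx + fa + ⟪b, y⟫| ≤ √(PDG fx fa A At b a x y) :=
  Real.abs_le_sqrt <| by
    rw [PDG, ← sq_abs]
    linarith [sq_nonneg ‖a + At y‖, sq_nonneg ‖A x - b‖]

theorem norm_add_le_sqrt_PDG : ‖a + At y‖ ≤ √(PDG fx fa A At b a x y) :=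
  Real.le_sqrt_of_sq_le <| by
    rw [PDG]
    linarith [sq_nonneg |fx + fa + ⟪b, y⟫|, sq_nonneg ‖A x - b‖]

theorem norm_sub_le_sqrt_PDG : ‖A x - b‖ ≤ √(PDG fx fa A At b a x y) :=
  Real.le_sqrt_of_sq_le <| by
    rw [PDG]
    linarith [sq_nonneg |fx + fa + ⟪b, y⟫|, sq_nonneg ‖a + At y‖]

theorem sq_div_add_sq_div_le_PDG_div {βx βy : ℝ} (hβx : 0 < βx) (hβy : 0 < βy) :
    ‖a + At y‖ ^ 2 / (2 * βx) + ‖A x - b‖ ^ 2 / (2 * βy)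
      ≤ PDG fx fa A At b a x y / (2 * min βx βy) := by
  have hm : 0 < min βx βy := lt_min hβx hβy
  calc ‖a + At y‖ ^ 2 / (2 * βx) + ‖A x - b‖ ^ 2 / (2 * βy)
      ≤ ‖a + At y‖ ^ 2 / (2 * min βx βy) + ‖A x - b‖ ^ 2 / (2 * min βx βy) := by
        gcongr
        exacts [min_le_left _ _, min_le_right _ _]
    _ ≤ PDG fx fa A At b a x y / (2 * min βx βy) := by
        rw [← add_div, PDG]
        gcongr
        linarith [sq_nonneg |fx + fa + ⟪b, y⟫|]

end PDG

section
variable {f : X → EReal} {A : X →L[ℝ] Y} {At : Y →L[ℝ] X} {b : Y} {fx fa : ℝ} {a x : X} {y : Y}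

theorem smoothedGap_self_le (hAt : ∀ (u : X) (v : Y), ⟪A u, v⟫ = ⟪u, At v⟫) {βx βy : ℝ}
    (hβx : 0 < βx) (hβy : 0 < βy) (hfx : f x = fx) (hfa : fenchel f a = fa) :
    smoothedGap f A b βx βy x y x y
      ≤ (((1 + ‖x‖ + ‖y‖) * √(PDG fx fa A At b a x y)
          + PDG fx fa A At b a x y / (2 * min βx βy) : ℝ) : EReal) := by
  refine iSup_le fun w => ?_
  set q := βx / 2 * ‖w.1 - x‖ ^ 2 + βy / 2 * ‖w.2 - y‖ ^ 2
  calc Lag f A b x w.2 - Lag f A b w.1 y - (q : EReal)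
      ≤ ((fx + ⟪A x - b, w.2⟫ - (⟪a + At y, w.1⟫ - fa - ⟪b, y⟫) - q : ℝ) : EReal) := by
        rw [Lag, hfx, EReal.coe_sub, EReal.coe_sub, EReal.coe_add]
        exact EReal.sub_le_sub (EReal.sub_le_sub le_rfl (coe_le_Lag hAt hfa w.1 y)) le_rfl
    _ ≤ _ := by
        rw [EReal.coe_le_coe_iff]
        simp only [q]
        set D := PDG fx fa A At b a x y
        have hc : |fx + fa + ⟪b, y⟫| ≤ √D := abs_le_sqrt_PDG
        have hp : ‖a + At y‖ ≤ √D := norm_add_le_sqrt_PDG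
        have hq : ‖A x - b‖ ≤ √D := norm_sub_le_sqrt_PDG
        have hpq : ‖a + At y‖ ^ 2 / (2 * βx) + ‖A x - b‖ ^ 2 / (2 * βy) ≤ D / (2 * min βx βy) :=
          sq_div_add_sq_div_le_PDG_div hβx hβy
        have := add_inner_sub_inner_sub_le hβx hβy (fx + fa + ⟪b, y⟫) (a + At y) x w.1
          (A x - b) y w.2
        linarith [mul_le_mul_of_nonneg_right hp (norm_nonneg x),
          mul_le_mul_of_nonneg_right hq (norm_nonneg y)]

theorem sub_le_mul_sqrt_PDG_of_map_eq (hAt : ∀ (u : X) (v : Y), ⟪A u, v⟫ = ⟪u, At v⟫)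
    (hfa : fenchel f a = fa) {u : X} {fu : ℝ} (hu : A u = b) (hfu : f u = fu) :
    fx - fu ≤ (1 + ‖x‖ + ‖x - u‖) * √(PDG fx fa A At b a x y) := by
  have h := coe_le_Lag (b := b) hAt hfa u y
  rw [Lag, hu, sub_self, inner_zero_left, EReal.coe_zero, add_zero, hfu,
    EReal.coe_le_coe_iff] at h
  set D := PDG fx fa A At b a x y
  have hc : |fx + fa + ⟪b, y⟫| ≤ √D := abs_le_sqrt_PDG
  have hp : ‖a + At y‖ ≤ √D := norm_add_le_sqrt_PDG
  have hpu := real_inner_le_norm (-(a + At y)) u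
  rw [inner_neg_left, norm_neg] at hpu
  have hu_le : ‖u‖ ≤ ‖x‖ + ‖x - u‖ := by
    simpa [norm_sub_rev] using norm_le_norm_add_norm_sub' u x
  linarith [le_abs_self (fx + fa + ⟪b, y⟫), mul_le_mul_of_nonneg_right hp (norm_nonneg u),
    mul_le_mul_of_nonneg_left hu_le (Real.sqrt_nonneg D)]

theorem sub_le_mul_sqrt_PDG (hAt : ∀ (u : X) (v : Y), ⟪A u, v⟫ = ⟪u, At v⟫)
    (hfx : f x = fx) (hfa : fenchel f a = fa) {xs : X} {ys : Y} (hs : IsSaddle f A b xs ys) :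
    f x - f xs ≤ (((1 + ‖x‖ + distZ (x, y) (saddleSet f A b)) * √(PDG fx fa A At b a x y) : ℝ)
      : EReal) := by
  have hx : f x ≠ ⊤ := hfx ▸ EReal.coe_ne_top fx
  have hfeas : ∀ w ∈ saddleSet f A b, A w.1 = b := fun w hw =>
    IsSaddle.map_eq_s11 hw (apply_ne_bot_of_fenchel_eq hfa _) (IsSaddle.apply_ne_top_s11 hw hx)
  obtain ⟨fs, hfs⟩ : ∃ fs : ℝ, f xs = fs :=
    ⟨_, (EReal.coe_toReal (hs.apply_ne_top_s11 hx) (apply_ne_bot_of_fenchel_eq hfa xs)).symm⟩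
  rw [hfx, hfs, ← EReal.coe_sub, EReal.coe_le_coe_iff]
  have : Nonempty (saddleSet f A b) := ⟨⟨(xs, ys), hs⟩⟩
  rw [add_mul, distZ, mul_comm (iInf _), Real.mul_iInf_of_nonneg (Real.sqrt_nonneg _),
    ← sub_le_iff_le_add']
  refine le_ciInf fun ⟨w, hw⟩ => ?_
  have hfw : f w.1 = fs := by rw [hw.apply_eq_s11 hs (hfeas w hw) (hfeas (xs, ys) hs), hfs]
  have hgap := sub_le_mul_sqrt_PDG_of_map_eq (fx := fx) (x := x) (y := y) hAt hfa (hfeas w hw) hfw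
  have hdist : ‖x - w.1‖ ≤ √(‖x - w.1‖ ^ 2 + ‖y - w.2‖ ^ 2) :=
    Real.le_sqrt_of_sq_le (by linarith [sq_nonneg ‖y - w.2‖])
  have := mul_le_mul_of_nonneg_left hdist (Real.sqrt_nonneg (PDG fx fa A At b a x y))
  dsimp only
  linarith

end

theorem optimality_gap_le_PDG_general
    (f : X → EReal) (A : X →L[ℝ] Y) (At : Y →L[ℝ] X) (b : Y)
    (hAt : ∀ (u : X) (v : Y), ⟪A u, v⟫ = ⟪u, At v⟫)
    (βx βy : ℝ) (hβx : 0 < βx) (hβy : 0 < βy)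
    (xs : X) (ys : Y) (hsaddle : IsSaddle f A b xs ys)
    (η : ℝ) (hη : 0 < η)
    (hQEB : ∀ z' : X × Y,
      ((η / 2 * (distZ z' (saddleSet f A b)) ^ 2 : ℝ) : EReal)
        ≤ smoothedGap f A b βx βy z'.1 z'.2 z'.1 z'.2)
    (x : X) (y : Y) (fx : ℝ) (hfx : f x = (fx : EReal))
    (a : X)
    (fa : ℝ) (hfa : fenchel f a = (fa : EReal)) :
    f x - f xs
      ≤ (((1 + ‖x‖
            + Real.sqrt (2 / η)
              * Real.sqrt ((1 + ‖x‖ + ‖y‖) * Real.sqrt (PDG fx fa A At b a x y)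
                  + PDG fx fa A At b a x y / (2 * min βx βy)))
          * Real.sqrt (PDG fx fa A At b a x y) : ℝ) : EReal) := by
  have hdist := le_sqrt_mul_sqrt_of_half_mul_sq_le hη <| EReal.coe_le_coe_iff.mp <|
    (hQEB (x, y)).trans (smoothedGap_self_le hAt hβx hβy hfx hfa)
  refine (sub_le_mul_sqrt_PDG (y := y) hAt hfx hfa hsaddle).trans (EReal.coe_le_coe_iff.mpr ?_)
  gcongr

/-- optimality-gap bound from the projected duality gap.
Assume the saddle-point set is nonempty (witnessed by `(xs, ys)`), `dom f*` is nonempty and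
closed, and the smoothed gap has a quadratic error bound with constant `η > 0`.  Then for
every `z = (x, y)` with `f(x) < +∞` (its finite value `fx` given by `hfx`), with
`a = Proj_{dom f*}(−Aᵀy)` (whose conjugate value `fa = f*(a)` is given by `hfa`) and
`D(z)` the projected duality gap,
`f(x) − f⋆ ≤ (1 + ‖x‖ + √(2/η) √((1 + ‖x‖ + ‖y‖) √(D(z)) + D(z)/(2 β_min))) √(D(z))`. -/
theorem optimality_gap_le_PDG
    [FiniteDimensional ℝ X] [FiniteDimensional ℝ Y]
    (f : X → EReal) (A : X →L[ℝ] Y) (At : Y →L[ℝ] X) (b : Y)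
    (hf_proper : EProper f) (hf_lsc : LowerSemicontinuous f) (hf_conv : EConvexOn f)
    (hAt : ∀ (u : X) (v : Y), ⟪A u, v⟫ = ⟪u, At v⟫)
    (βx βy : ℝ) (hβx : 0 < βx) (hβy : 0 < βy)
    (xs : X) (ys : Y) (hsaddle : IsSaddle f A b xs ys)
    (hdom_ne : (fdom f).Nonempty) (hdom_closed : IsClosed (fdom f))
    (η : ℝ) (hη : 0 < η)
    (hQEB : ∀ z' : X × Y,
      ((η / 2 * (distZ z' (saddleSet f A b)) ^ 2 : ℝ) : EReal)
        ≤ smoothedGap f A b βx βy z'.1 z'.2 z'.1 z'.2)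
    (x : X) (y : Y) (fx : ℝ) (hfx : f x = (fx : EReal))
    (a : X) (ha : IsProj (fdom f) (-(At y)) a)
    (fa : ℝ) (hfa : fenchel f a = (fa : EReal)) :
    f x - f xs
      ≤ (((1 + ‖x‖
            + Real.sqrt (2 / η)
              * Real.sqrt ((1 + ‖x‖ + ‖y‖) * Real.sqrt (PDG fx fa A At b a x y)
                  + PDG fx fa A At b a x y / (2 * min βx βy)))
          * Real.sqrt (PDG fx fa A At b a x y) : ℝ) : EReal) :=
  optimality_gap_le_PDG_general f A At b hAt βx βy hβx hβy xs ys hsaddle η hη hQEB x y fx hfx a fa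
    hfa
end
end

section
/- For every β = (βx, βy) ∈ (0,∞)², every z = (x,y) ∈ X × Y with f(x) < +∞, and every q ∈ ∂f(x), the self-centered smoothed gap satisfies G_β(z) ≤ max(1/βx, 1/(2βy)) · ( ‖q + Aᵀy‖² + ‖Ax − b‖² ). -/
open scoped RealInnerProductSpace
open Filter Topology Metric

noncomputable section

variable {X Y : Type*} [NormedAddCommGroup X] [InnerProductSpace ℝ X]
  [NormedAddCommGroup Y] [InnerProductSpace ℝ Y]

lemma aux_inner_sq {E : Type*} [NormedAddCommGroup E] [InnerProductSpace ℝ E]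
    (v d : E) (β : ℝ) (hβ : 0 < β) :
    ⟪v, d⟫ - β / 2 * ‖d‖ ^ 2 ≤ ‖v‖ ^ 2 / (2 * β) := by
  have h1 : ⟪v, d⟫ ≤ ‖v‖ * ‖d‖ := real_inner_le_norm v d
  rw [sub_le_iff_le_add, div_add' _ _ _ (by positivity), le_div_iff₀ (by positivity)]
  nlinarith [sq_nonneg (‖v‖ - β * ‖d‖), norm_nonneg v, norm_nonneg d]

/-- smoothed gap bounded by the KKT error.
For every `β ∈ (0,∞)²`, every `z = (x, y)` with `f(x) < +∞`, and every `q ∈ ∂f(x)`,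
`G_β(z) ≤ max(1/βx, 1/(2βy)) (‖q + Aᵀy‖² + ‖Ax − b‖²)`. -/
theorem smoothedGap_le_KKT
    [FiniteDimensional ℝ X] [FiniteDimensional ℝ Y]
    (f : X → EReal) (A : X →L[ℝ] Y) (At : Y →L[ℝ] X) (b : Y)
    (hf_proper : EProper f) (hf_lsc : LowerSemicontinuous f) (hf_conv : EConvexOn f)
    (hAt : ∀ (u : X) (v : Y), ⟪A u, v⟫ = ⟪u, At v⟫)
    (βx βy : ℝ) (hβx : 0 < βx) (hβy : 0 < βy)
    (x : X) (y : Y) (hfx : f x < ⊤)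
    (q : X) (hq : q ∈ ESubdiff f x) :
    smoothedGap f A b βx βy x y x y
      ≤ ((max (1 / βx) (1 / (2 * βy))
          * (‖q + At y‖ ^ 2 + ‖A x - b‖ ^ 2) : ℝ) : EReal) := by
  rw [smoothedGap]
  apply iSup_le
  intro w
  by_cases hw : f w.1 = ⊤
  · have h1 : Lag f A b w.1 y = ⊤ := by
      simp [Lag, hw]
    rw [h1]
    rw [EReal.sub_top, EReal.bot_sub]
    exact bot_le
  · have hbx := hf_proper.1 x
    have hbw := hf_proper.1 w.1
    set fx : ℝ := (f x).toReal with hfxdef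
    set fw : ℝ := (f w.1).toReal with hfwdef
    have hfx' : f x = (fx : EReal) := (EReal.coe_toReal hfx.ne hbx).symm
    have hfw' : f w.1 = (fw : EReal) := (EReal.coe_toReal hw hbw).symm
    have hsub : fx + ⟪q, w.1 - x⟫ ≤ fw := by
      have := hq w.1
      rw [hfx', hfw'] at this
      exact_mod_cast this
    rw [Lag, Lag, hfx', hfw']
    have hcast : ((fx : EReal) + ((⟪A x - b, w.2⟫ : ℝ) : EReal)
        - ((fw : EReal) + ((⟪A w.1 - b, y⟫ : ℝ) : EReal))
        - ((βx / 2 * ‖w.1 - x‖ ^ 2 + βy / 2 * ‖w.2 - y‖ ^ 2 : ℝ) : EReal))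
        = ((fx + ⟪A x - b, w.2⟫ - (fw + ⟪A w.1 - b, y⟫)
            - (βx / 2 * ‖w.1 - x‖ ^ 2 + βy / 2 * ‖w.2 - y‖ ^ 2) : ℝ) : EReal) := by
      norm_cast
    rw [hcast, EReal.coe_le_coe_iff]
    -- real inequality
    have hA1 : ⟪A w.1 - b, y⟫ = ⟪A x - b, y⟫ + ⟪w.1 - x, At y⟫ := by
      rw [← hAt]
      have : A w.1 - b = (A x - b) + A (w.1 - x) := by
        rw [map_sub]; abel
      rw [this, inner_add_left]
    have hA2 : ⟪A x - b, w.2⟫ = ⟪A x - b, y⟫ + ⟪A x - b, w.2 - y⟫ := by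
      rw [← inner_add_right]
      congr 1
      abel
    have hi1 : ⟪-(q + At y), w.1 - x⟫ = -(⟪q, w.1 - x⟫ + ⟪w.1 - x, At y⟫) := by
      rw [inner_neg_left, inner_add_left, real_inner_comm (At y)]
    have k1 : ⟪-(q + At y), w.1 - x⟫ - βx / 2 * ‖w.1 - x‖ ^ 2
        ≤ ‖q + At y‖ ^ 2 / (2 * βx) := by
      have := aux_inner_sq (-(q + At y)) (w.1 - x) βx hβx
      rwa [norm_neg] at this
    have k2 : ⟪A x - b, w.2 - y⟫ - βy / 2 * ‖w.2 - y‖ ^ 2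
        ≤ ‖A x - b‖ ^ 2 / (2 * βy) := aux_inner_sq _ _ βy hβy
    have m1 : 1 / βx ≤ max (1 / βx) (1 / (2 * βy)) := le_max_left _ _
    have m2 : 1 / (2 * βy) ≤ max (1 / βx) (1 / (2 * βy)) := le_max_right _ _
    have hn1 : (0:ℝ) ≤ ‖q + At y‖ ^ 2 := sq_nonneg _
    have hn2 : (0:ℝ) ≤ ‖A x - b‖ ^ 2 := sq_nonneg _
    have e1 : ‖q + At y‖ ^ 2 / (2 * βx) ≤ max (1 / βx) (1 / (2 * βy)) * ‖q + At y‖ ^ 2 := by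
      have h : ‖q + At y‖ ^ 2 / (2 * βx) ≤ 1 / βx * ‖q + At y‖ ^ 2 := by
        rw [div_eq_mul_inv, mul_comm]
        apply mul_le_mul_of_nonneg_right _ hn1
        rw [one_div]
        apply inv_anti₀ hβx
        linarith
      exact h.trans (mul_le_mul_of_nonneg_right m1 hn1)
    have e2 : ‖A x - b‖ ^ 2 / (2 * βy) ≤ max (1 / βx) (1 / (2 * βy)) * ‖A x - b‖ ^ 2 := by
      rw [div_eq_mul_inv, mul_comm, ← one_div]
      exact mul_le_mul_of_nonneg_right m2 hn2
    rw [hA1, hA2] at *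
    rw [hi1] at k1
    nlinarith [k1, k2, e1, e2, hsub]
end
end

section
/- Let β = (βx, βy) ∈ (0,∞)² and suppose f : X → ℝ is convex, differentiable, and its gradient ∇f is L-Lipschitz. Then for every z = (x,y) ∈ X × Y, the Karush–Kuhn–Tucker error is bounded by the self-centered smoothed gap: ‖∇f(x) + Aᵀy‖² + ‖Ax − b‖² ≤ max( 2(L + βx)²/βx, 2βy ) · G_β(z). -/
open scoped RealInnerProductSpace
open Filter Topology Metric

noncomputable section

variable {X Y : Type*} [NormedAddCommGroup X] [InnerProductSpace ℝ X]
  [NormedAddCommGroup Y] [InnerProductSpace ℝ Y]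

/-!
Evaluate the supremum defining `G_β(z)` at one gradient step in each variable,
`x' = x − (∇f(x) + Aᵀy)/(L + βx)` and `y' = y + (Ax − b)/βy`. The descent lemma
`f(x + h) ≤ f(x) + ⟪∇f(x), h⟫ + (L/2)‖h‖²` bounds the primal part of the gap there from below
by `‖∇f(x) + Aᵀy‖²/(2(L + βx))`, and the dual part equals `‖Ax − b‖²/(2βy)`. Since
`2(L + βx)²/βx ≥ 2(L + βx)`, the constant in the statement dominates both reciprocal weights.
-/

section Descent

open Set

variable {E : Type*} [NormedAddCommGroup E] [NormedSpace ℝ E]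

theorem apply_add_le_of_hasFDerivAt_of_lipschitzWith {f : E → ℝ} {f' : E → E →L[ℝ] ℝ} {L : NNReal}
    (hf : ∀ u, HasFDerivAt f (f' u) u) (hL : LipschitzWith L f') (x h : E) :
    f (x + h) ≤ f x + f' x h + L / 2 * ‖h‖ ^ 2 := by
  set φ : ℝ → ℝ := fun s => f (x + s • h) - s * f' x h - L / 2 * s ^ 2 * ‖h‖ ^ 2
  have hφ : ∀ s, HasDerivAt φ (f' (x + s • h) h - f' x h - L * s * ‖h‖ ^ 2) s := by
    intro s
    have hline : HasDerivAt (fun s : ℝ => x + s • h) h s := by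
      simpa using ((hasDerivAt_id s).smul_const h).const_add x
    have := (((hf _).comp_hasDerivAt s hline).sub ((hasDerivAt_id s).mul_const (f' x h))).sub
      (((hasDerivAt_pow 2 s).const_mul (L / 2 : ℝ)).mul_const (‖h‖ ^ 2))
    exact this.congr_deriv (by push_cast; ring)
  have hφ_nonpos : ∀ s ∈ interior (Ici (0 : ℝ)),
      f' (x + s • h) h - f' x h - L * s * ‖h‖ ^ 2 ≤ 0 := by
    intro s hs
    rw [interior_Ici, mem_Ioi] at hs
    have hdiff : ‖f' (x + s • h) - f' x‖ ≤ L * (s * ‖h‖) := by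
      simpa [dist_eq_norm, norm_smul, abs_of_pos hs] using hL.dist_le_mul (x + s • h) x
    rw [sub_nonpos]
    calc f' (x + s • h) h - f' x h = (f' (x + s • h) - f' x) h := by simp
      _ ≤ ‖f' (x + s • h) - f' x‖ * ‖h‖ := le_of_abs_le ((f' (x + s • h) - f' x).le_opNorm h)
      _ ≤ L * (s * ‖h‖) * ‖h‖ := by gcongr
      _ = L * s * ‖h‖ ^ 2 := by ring
  have hanti := antitoneOn_of_hasDerivWithinAt_nonpos (convex_Ici 0)
    (fun s _ => (hφ s).continuousAt.continuousWithinAt) (fun s _ => (hφ s).hasDerivWithinAt)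
    hφ_nonpos
  have := hanti self_mem_Ici (by norm_num : (1 : ℝ) ∈ Ici 0) zero_le_one
  simp only [φ] at this
  norm_num at this
  linarith

end Descent

section Smooth

variable [CompleteSpace X] {f : X → ℝ} {f' : X → X} {L : NNReal}

theorem apply_add_le_of_hasGradientAt_of_lipschitzWith (hf : ∀ u, HasGradientAt f (f' u) u)
    (hL : LipschitzWith L f') (x h : X) :
    f (x + h) ≤ f x + ⟪f' x, h⟫ + L / 2 * ‖h‖ ^ 2 := by
  have hL' : LipschitzWith L (fun u => InnerProductSpace.toDual ℝ X (f' u)) := by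
    have := (InnerProductSpace.toDual ℝ X).lipschitz.comp hL
    rw [one_mul] at this
    exact this
  simpa using apply_add_le_of_hasFDerivAt_of_lipschitzWith (fun u => (hf u).hasFDerivAt) hL' x h

theorem gradientStep_sq_norm_div_le (hf : ∀ u, HasGradientAt f (f' u) u)
    (hL : LipschitzWith L f') (p x : X) {β : ℝ} (hβ : (L : ℝ) + β ≠ 0) :
    ‖f' x + p‖ ^ 2 / (2 * (L + β)) ≤
      f x - f (x - (L + β)⁻¹ • (f' x + p)) + ⟪(L + β)⁻¹ • (f' x + p), p⟫
        - β / 2 * ‖(L + β)⁻¹ • (f' x + p)‖ ^ 2 := by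
  set t : ℝ := (L + β)⁻¹
  set g := f' x + p
  have hdescent := apply_add_le_of_hasGradientAt_of_lipschitzWith hf hL x (-(t • g))
  have hinner : ⟪f' x, t • g⟫ + ⟪t • g, p⟫ = t * ‖g‖ ^ 2 := by
    rw [real_inner_smul_right, real_inner_smul_left, ← mul_add, real_inner_comm p,
      ← inner_add_left, real_inner_self_eq_norm_sq]
  have hnorm : ‖t • g‖ ^ 2 = t ^ 2 * ‖g‖ ^ 2 := by
    rw [norm_smul, mul_pow, Real.norm_eq_abs, sq_abs]
  have hstep : ‖g‖ ^ 2 / (2 * (L + β)) = (t - (L + β) / 2 * t ^ 2) * ‖g‖ ^ 2 := by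
    simp only [t]
    field_simp
    ring
  rw [← sub_eq_add_neg, inner_neg_right, norm_neg, hnorm] at hdescent
  rw [hnorm, hstep]
  linear_combination hdescent - hinner

end Smooth

theorem inner_smul_inv_sub_sq_norm (v : Y) {β : ℝ} (hβ : β ≠ 0) :
    ⟪v, β⁻¹ • v⟫ - β / 2 * ‖β⁻¹ • v‖ ^ 2 = ‖v‖ ^ 2 / (2 * β) := by
  rw [real_inner_smul_right, real_inner_self_eq_norm_sq, norm_smul, mul_pow, Real.norm_eq_abs,
    sq_abs]
  field_simp
  ring

theorem le_smoothedGap_self (f : X → ℝ) (A : X →L[ℝ] Y) {At : Y →L[ℝ] X} (b : Y)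
    (hAt : ∀ u v, ⟪A u, v⟫ = ⟪u, At v⟫) (βx βy : ℝ) (x : X) (y : Y) (d : X) (e : Y) :
    (((f x - f (x - d) + ⟪d, At y⟫ - βx / 2 * ‖d‖ ^ 2)
        + (⟪A x - b, e⟫ - βy / 2 * ‖e‖ ^ 2) : ℝ) : EReal)
      ≤ smoothedGap (fun u => ((f u : ℝ) : EReal)) A b βx βy x y x y := by
  refine le_trans (le_of_eq ?_) (le_iSup _ (x - d, y + e))
  have hlin : ⟪A x - b, y + e⟫ - ⟪A (x - d) - b, y⟫ = ⟪d, At y⟫ + ⟪A x - b, e⟫ := by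
    rw [map_sub, sub_right_comm, inner_sub_left (A x - b) (A d), hAt d y, inner_add_right]
    ring
  simp only [Lag, ← EReal.coe_add, ← EReal.coe_sub, EReal.coe_eq_coe_iff]
  rw [sub_sub_cancel_left, norm_neg, add_sub_cancel_left]
  linarith

theorem add_le_max_mul_div_add_div {a b c d : ℝ} (ha : 0 ≤ a) (hb : 0 ≤ b) (hc : 0 < c)
    (hd : 0 < d) : a + b ≤ max c d * (a / c + b / d) :=
  calc a + b = c * (a / c) + d * (b / d) := by field_simp
    _ ≤ max c d * (a / c) + max c d * (b / d) := by
      gcongr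
      exacts [le_max_left c d, le_max_right c d]
    _ = max c d * (a / c + b / d) := by ring

theorem KKT_le_smoothedGap_general
    [FiniteDimensional ℝ X]
    (f : X → ℝ) (A : X →L[ℝ] Y) (At : Y →L[ℝ] X) (b : Y)
    (f' : X → X) (hf' : ∀ u : X, HasGradientAt f (f' u) u)
    (L : NNReal) (hLip : LipschitzWith L f')
    (hAt : ∀ (u : X) (v : Y), ⟪A u, v⟫ = ⟪u, At v⟫)
    (βx βy : ℝ) (hβx : 0 < βx) (hβy : 0 < βy)
    (x : X) (y : Y) :
    ((‖f' x + At y‖ ^ 2 + ‖A x - b‖ ^ 2 : ℝ) : EReal)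
      ≤ ((max (2 * ((L : ℝ) + βx) ^ 2 / βx) (2 * βy) : ℝ) : EReal)
          * smoothedGap (fun u => ((f u : ℝ) : EReal)) A b βx βy x y x y := by
  have hc : 0 < (L : ℝ) + βx := by positivity
  have hprimal := gradientStep_sq_norm_div_le hf' hLip (At y) x hc.ne'
  have hdual := inner_smul_inv_sub_sq_norm (A x - b) hβy.ne'
  have hgap := le_smoothedGap_self f A b hAt βx βy x y
    (((L : ℝ) + βx)⁻¹ • (f' x + At y)) (βy⁻¹ • (A x - b))
  have hgain : ((‖f' x + At y‖ ^ 2 / (2 * ((L : ℝ) + βx)) + ‖A x - b‖ ^ 2 / (2 * βy) : ℝ) : EReal)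
      ≤ smoothedGap (fun u => ((f u : ℝ) : EReal)) A b βx βy x y x y :=
    (EReal.coe_le_coe_iff.2 (by linarith)).trans hgap
  have hconst : max (2 * ((L : ℝ) + βx)) (2 * βy) ≤ max (2 * ((L : ℝ) + βx) ^ 2 / βx) (2 * βy) :=
    max_le_max (by rw [le_div_iff₀ hβx]; nlinarith [L.coe_nonneg]) le_rfl
  have hkkt := (add_le_max_mul_div_add_div (sq_nonneg ‖f' x + At y‖) (sq_nonneg ‖A x - b‖)
    (by positivity) (by positivity)).trans (mul_le_mul_of_nonneg_right hconst (by positivity))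
  rw [← EReal.coe_le_coe_iff, EReal.coe_mul] at hkkt
  exact hkkt.trans (mul_le_mul_of_nonneg_left hgain (EReal.coe_nonneg.2 (by positivity)))

/-- KKT error bounded by the smoothed gap for smooth `f`.
If `f : X → ℝ` is convex and differentiable with gradient `f'` that is `L`-Lipschitz, then
`‖∇f(x) + Aᵀy‖² + ‖Ax − b‖² ≤ max(2(L + βx)²/βx, 2βy) G_β(z)`. -/
theorem KKT_le_smoothedGap
    [FiniteDimensional ℝ X] [FiniteDimensional ℝ Y]
    (f : X → ℝ) (A : X →L[ℝ] Y) (At : Y →L[ℝ] X) (b : Y)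
    (hf_conv : ConvexOn ℝ Set.univ f)
    (f' : X → X) (hf' : ∀ u : X, HasGradientAt f (f' u) u)
    (L : NNReal) (hLip : LipschitzWith L f')
    (hAt : ∀ (u : X) (v : Y), ⟪A u, v⟫ = ⟪u, At v⟫)
    (βx βy : ℝ) (hβx : 0 < βx) (hβy : 0 < βy)
    (x : X) (y : Y) :
    ((‖f' x + At y‖ ^ 2 + ‖A x - b‖ ^ 2 : ℝ) : EReal)
      ≤ ((max (2 * ((L : ℝ) + βx) ^ 2 / βx) (2 * βy) : ℝ) : EReal)
          * smoothedGap (fun u => ((f u : ℝ) : EReal)) A b βx βy x y x y :=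
  KKT_le_smoothedGap_general f A At b f' hf' L hLip hAt βx βy hβx hβy x y
end
end

section
/- Let β = (βx, βy) ∈ (0,∞)², β_min = min(βx, βy), and assume dom f* is nonempty and closed. Then for every z = (x,y) ∈ X × Y with f(x) < +∞, the self-centered smoothed gap is bounded by the projected duality gap: G_β(z) ≤ (1 + ‖x‖ + ‖y‖) √(D(z)) + D(z)/(2 β_min). -/
open scoped RealInnerProductSpace
open Filter Topology Metric

noncomputable section

variable {X Y : Type*} [NormedAddCommGroup X] [InnerProductSpace ℝ X]
  [NormedAddCommGroup Y] [InnerProductSpace ℝ Y]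

/-- smoothed gap bounded by the projected duality gap.
Assume `dom f*` is nonempty and closed.  Then for every `z = (x, y)` with `f(x) < +∞`
(its finite value `fx` given by `hfx`), with `a = Proj_{dom f*}(−Aᵀy)` (whose conjugate
value `fa = f*(a)` is given by `hfa`) and `D(z)` the projected duality gap,
`G_β(z) ≤ (1 + ‖x‖ + ‖y‖) √(D(z)) + D(z)/(2 β_min)`. -/
theorem smoothedGap_le_PDG
    [FiniteDimensional ℝ X] [FiniteDimensional ℝ Y]
    (f : X → EReal) (A : X →L[ℝ] Y) (At : Y →L[ℝ] X) (b : Y)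
    (hf_proper : EProper f) (hf_lsc : LowerSemicontinuous f) (hf_conv : EConvexOn f)
    (hAt : ∀ (u : X) (v : Y), ⟪A u, v⟫ = ⟪u, At v⟫)
    (βx βy : ℝ) (hβx : 0 < βx) (hβy : 0 < βy)
    (hdom_ne : (fdom f).Nonempty) (hdom_closed : IsClosed (fdom f))
    (x : X) (y : Y) (fx : ℝ) (hfx : f x = (fx : EReal))
    (a : X) (ha : IsProj (fdom f) (-(At y)) a)
    (fa : ℝ) (hfa : fenchel f a = (fa : EReal)) :
    smoothedGap f A b βx βy x y x y
      ≤ (((1 + ‖x‖ + ‖y‖) * Real.sqrt (PDG fx fa A At b a x y)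
          + PDG fx fa A At b a x y / (2 * min βx βy) : ℝ) : EReal) := by
  have hm : 0 < min βx βy := lt_min hβx hβy
  -- key consequence of hfa : every u satisfies ⟪a,u⟫ - f u ≤ fa
  have hkey : ∀ u : X, ((⟪a, u⟫ : ℝ) : EReal) - f u ≤ (fa : EReal) := by
    intro u
    rw [← hfa]
    exact le_iSup (fun u : X => ((⟪a, u⟫ : ℝ) : EReal) - f u) u
  -- abbreviations
  set D : ℝ := PDG fx fa A At b a x y with hD
  set r : ℝ := Real.sqrt D with hr
  have hDdef : D = |fx + fa + ⟪b, y⟫| ^ 2 + ‖a + At y‖ ^ 2 + ‖A x - b‖ ^ 2 := rfl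
  have hD0 : 0 ≤ D := by rw [hDdef]; positivity
  have hr0 : 0 ≤ r := Real.sqrt_nonneg D
  have hsr : fx + fa + ⟪b, y⟫ ≤ r := by
    have h1 : |fx + fa + ⟪b, y⟫| = Real.sqrt (|fx + fa + ⟪b, y⟫| ^ 2) :=
      (Real.sqrt_sq (abs_nonneg _)).symm
    have h2 : Real.sqrt (|fx + fa + ⟪b, y⟫| ^ 2) ≤ r := by
      apply Real.sqrt_le_sqrt
      rw [hDdef]
      nlinarith [sq_nonneg ‖a + At y‖, sq_nonneg ‖A x - b‖]
    calc fx + fa + ⟪b, y⟫ ≤ |fx + fa + ⟪b, y⟫| := le_abs_self _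
      _ ≤ r := h1 ▸ h2
  have hqr : ‖a + At y‖ ≤ r := by
    have h1 : ‖a + At y‖ = Real.sqrt (‖a + At y‖ ^ 2) := (Real.sqrt_sq (norm_nonneg _)).symm
    rw [h1]
    apply Real.sqrt_le_sqrt
    rw [hDdef]
    nlinarith [sq_nonneg |fx + fa + ⟪b, y⟫|, sq_nonneg ‖A x - b‖]
  have hgr : ‖A x - b‖ ≤ r := by
    have h1 : ‖A x - b‖ = Real.sqrt (‖A x - b‖ ^ 2) := (Real.sqrt_sq (norm_nonneg _)).symm
    rw [h1]
    apply Real.sqrt_le_sqrt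
    rw [hDdef]
    nlinarith [sq_nonneg |fx + fa + ⟪b, y⟫|, sq_nonneg ‖a + At y‖]
  -- AM-GM helper
  have amgm : ∀ (β t c : ℝ), 0 < β → c * t ≤ β / 2 * t ^ 2 + c ^ 2 / (2 * β) := by
    intro β t c hβ
    have h : β/2*t^2 + c^2/(2*β) - c*t = (c - β*t)^2 / (2*β) := by field_simp; ring
    nlinarith [div_nonneg (sq_nonneg (c - β*t)) (by linarith : (0:ℝ) ≤ 2*β)]
  -- main: bound each term of the sup
  apply iSup_le
  rintro ⟨x', y'⟩
  by_cases htop : f x' = ⊤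
  · have : Lag f A b x y' - Lag f A b x' y
        - ((βx / 2 * ‖x' - x‖ ^ 2 + βy / 2 * ‖y' - y‖ ^ 2 : ℝ) : EReal) = ⊥ := by
      simp [Lag, htop, hfx, sub_eq_add_neg, ← EReal.coe_add]
    rw [this]
    exact bot_le
  · obtain ⟨fx', hfx'⟩ : ∃ v : ℝ, f x' = (v : EReal) :=
      ⟨(f x').toReal, (EReal.coe_toReal htop (hf_proper.1 x')).symm⟩
    have hkey' : ⟪a, x'⟫ - fx' ≤ fa := by
      have := hkey x'
      rw [hfx'] at this
      exact_mod_cast this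
    simp only [Lag, hfx, hfx', ← EReal.coe_add, ← EReal.coe_sub]
    rw [EReal.coe_le_coe_iff]
    -- now a purely real inequality
    have F1 : ⟪A x' - b, y⟫ = ⟪x', At y⟫ - ⟪b, y⟫ := by
      rw [inner_sub_left, hAt]
    have F2 : ⟪a, x'⟫ + ⟪x', At y⟫ = ⟪a + At y, x'⟫ := by
      rw [inner_add_left, real_inner_comm x' (At y)]
    have F3 : ⟪A x - b, y'⟫ ≤ ⟪A x - b, y⟫ + βy / 2 * ‖y' - y‖ ^ 2
        + ‖A x - b‖ ^ 2 / (2 * βy) := by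
      have h1 : ⟪A x - b, y' - y⟫ ≤ ‖A x - b‖ * ‖y' - y‖ := real_inner_le_norm _ _
      have h2 := amgm βy ‖y' - y‖ ‖A x - b‖ hβy
      have h3 : ⟪A x - b, y'⟫ - ⟪A x - b, y⟫ = ⟪A x - b, y' - y⟫ := (inner_sub_right _ _ _).symm
      linarith
    have F4 : -⟪a + At y, x'⟫ ≤ -⟪a + At y, x⟫ + βx / 2 * ‖x' - x‖ ^ 2
        + ‖a + At y‖ ^ 2 / (2 * βx) := by
      have h1 : ⟪-(a + At y), x' - x⟫ ≤ ‖-(a + At y)‖ * ‖x' - x‖ := real_inner_le_norm _ _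
      have h2 := amgm βx ‖x' - x‖ ‖a + At y‖ hβx
      have h3 : ⟪-(a + At y), x' - x⟫ = -⟪a + At y, x'⟫ + ⟪a + At y, x⟫ := by
        rw [inner_neg_left, inner_sub_right]; ring
      rw [norm_neg] at h1
      linarith
    have F6 : ⟪A x - b, y⟫ ≤ ‖y‖ * r := by
      calc ⟪A x - b, y⟫ ≤ ‖A x - b‖ * ‖y‖ := real_inner_le_norm _ _
        _ ≤ r * ‖y‖ := mul_le_mul_of_nonneg_right hgr (norm_nonneg _)
        _ = ‖y‖ * r := mul_comm _ _
    have F7 : -⟪a + At y, x⟫ ≤ ‖x‖ * r := by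
      calc -⟪a + At y, x⟫ = ⟪-(a + At y), x⟫ := by rw [inner_neg_left]
        _ ≤ ‖-(a + At y)‖ * ‖x‖ := real_inner_le_norm _ _
        _ = ‖a + At y‖ * ‖x‖ := by rw [norm_neg]
        _ ≤ r * ‖x‖ := mul_le_mul_of_nonneg_right hqr (norm_nonneg _)
        _ = ‖x‖ * r := mul_comm _ _
    have F8 : ‖A x - b‖ ^ 2 / (2 * βy) + ‖a + At y‖ ^ 2 / (2 * βx)
        ≤ D / (2 * min βx βy) := by
      have h1 : ‖A x - b‖ ^ 2 / (2 * βy) ≤ ‖A x - b‖ ^ 2 / (2 * min βx βy) := by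
        gcongr
        all_goals first | positivity | exact min_le_right _ _
      have h2 : ‖a + At y‖ ^ 2 / (2 * βx) ≤ ‖a + At y‖ ^ 2 / (2 * min βx βy) := by
        gcongr
        all_goals first | positivity | exact min_le_left _ _
      have h3 : (‖A x - b‖ ^ 2 + ‖a + At y‖ ^ 2) / (2 * min βx βy) ≤ D / (2 * min βx βy) := by
        gcongr
        rw [hDdef]
        nlinarith [sq_nonneg |fx + fa + ⟪b, y⟫|]
      rw [add_div] at h3
      linarith
    have hrr : (1 + ‖x‖ + ‖y‖) * r = r + ‖x‖ * r + ‖y‖ * r := by ring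
    rw [hrr]
    rw [F1] at *
    linarith [hkey', F2, F3, F4, F6, F7, F8, hsr]
end
end

section
/- Let β = (βx, βy) ∈ (0,∞)² and assume dom f* is nonempty and closed. Then for every z = (x,y) ∈ X × Y with f(x) < +∞, with a = Proj_{dom f*}(−Aᵀy), the quantity f(x) + f*(a) + ⟨b, y⟩ satisfies the lower bound f(x) + f*(a) + ⟨b, y⟩ ≥ −( √(2βx)‖x‖ + √(2βy)‖y‖ ) √(G_β(z)). -/
open scoped RealInnerProductSpace
open Filter Topology Metric

noncomputable section

variable {X Y : Type*} [NormedAddCommGroup X] [InnerProductSpace ℝ X]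
  [NormedAddCommGroup Y] [InnerProductSpace ℝ Y]

/-! Write `φ = -Aᵀy` and let `p` be the proximal point of `f / βx` at `x + φ / βx`. Its optimality
condition says `φ + βx (x - p) ∈ ∂f(p) ⊆ dom f*`, so `‖a + Aᵀy‖ ≤ βx ‖x - p‖`; testing the smoothed
gap at `(p, y)` and using that subgradient inequality at `x` gives `(βx / 2) ‖x - p‖² ≤ G`.
Testing it at `(x, y + (Ax - b) / βy)` gives `‖Ax - b‖² ≤ 2 βy G`. Finally, by Fenchel–Young,
`f(x) + f*(a) + ⟪b, y⟫ ≥ ⟪a + Aᵀy, x⟫ - ⟪Ax - b, y⟫`, and Cauchy–Schwarz finishes. -/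

theorem inner_sub_le_fenchel (f : X → EReal) (φ u : X) :
    ((⟪φ, u⟫ : ℝ) : EReal) - f u ≤ fenchel f φ :=
  le_iSup (fun u => ((⟪φ, u⟫ : ℝ) : EReal) - f u) u

theorem inner_sub_le_of_fenchel_eq {f : X → EReal} {φ : X} {c : ℝ}
    (hc : fenchel f φ = c) (u : X) : ((⟪φ, u⟫ - c : ℝ) : EReal) ≤ f u := by
  have h := inner_sub_le_fenchel f φ u
  rw [hc, EReal.sub_le_iff_le_add (Or.inr (EReal.coe_ne_top c)) (Or.inr (EReal.coe_ne_bot c))]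
    at h
  rw [EReal.coe_sub]
  exact EReal.sub_le_of_le_add' h

theorem ne_bot_of_fenchel_eq {f : X → EReal} {φ : X} {c : ℝ}
    (hc : fenchel f φ = c) (u : X) : f u ≠ ⊥ :=
  ne_bot_of_le_ne_bot (EReal.coe_ne_bot _) (inner_sub_le_of_fenchel_eq hc u)

theorem mem_fdom_of_mem_eSubdiff {f : X → EReal} {p q : X} {fp : ℝ} (hp : f p = fp)
    (hq : q ∈ ESubdiff f p) : q ∈ fdom f := by
  have hle : fenchel f q ≤ ((⟪q, p⟫ - fp : ℝ) : EReal) := by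
    refine iSup_le fun u => ?_
    have h := hq u
    rw [hp, ← EReal.coe_add] at h
    rw [EReal.sub_le_iff_le_add (Or.inr (EReal.coe_ne_top _)) (Or.inr (EReal.coe_ne_bot _))]
    refine le_trans ?_ (add_le_add_right h _)
    rw [← EReal.coe_add, EReal.coe_le_coe_iff, inner_sub_right]
    linarith
  exact ne_top_of_le_ne_top (EReal.coe_ne_top _) hle

theorem LowerSemicontinuous.exists_forall_le_of_isCompact {α β : Type*} [TopologicalSpace α]
    [LinearOrder β] {F : α → β} (hF : LowerSemicontinuous F) {x₀ : α}
    (hK : IsCompact {u | F u ≤ F x₀}) : ∃ p, ∀ u, F p ≤ F u := by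
  obtain ⟨p, hpK, hp⟩ := (hF.lowerSemicontinuousOn _).exists_isMinOn ⟨x₀, le_refl (F x₀)⟩ hK
  refine ⟨p, fun u => ?_⟩
  by_cases hu : F u ≤ F x₀
  · exact hp hu
  · exact hpK.trans (not_le.1 hu).le

theorem exists_isProx [FiniteDimensional ℝ X] {f : X → EReal} (hf : LowerSemicontinuous f)
    {ψ : X} {c : ℝ} (hminor : ∀ u, ((⟪ψ, u⟫ - c : ℝ) : EReal) ≤ f u) {s : ℝ} (hs : 0 < s)
    (v : X) : ∃ p, IsProx f s v p := by
  set q : X → ℝ := fun u => 1 / (2 * s) * ‖u - v‖ ^ 2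
  set F : X → EReal := fun u => f u + q u
  have hF : LowerSemicontinuous F :=
    hf.add' (continuous_coe_real_ereal.comp (by fun_prop)).lowerSemicontinuous fun u =>
      EReal.continuousAt_add (Or.inr (EReal.coe_ne_bot _)) (Or.inr (EReal.coe_ne_top _))
  by_cases htop : ∀ u, f u = ⊤
  · exact ⟨v, fun u => by rw [htop, htop, EReal.top_add_coe, EReal.top_add_coe]⟩
  push Not at htop
  obtain ⟨x₀, hx₀⟩ := htop
  lift f x₀ to ℝ using ⟨hx₀, ne_bot_of_le_ne_bot (EReal.coe_ne_bot _) (hminor x₀)⟩ with M hM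
  set K : ℝ := M + q x₀ + c - ⟪ψ, v⟫
  -- with `r = ‖u - v‖`: `‖ψ‖ r ≤ r² / (4s) + s ‖ψ‖²` and `r ≤ r² + 1`
  have hsub : {u | F u ≤ F x₀} ⊆ closedBall v (4 * s * (K + s * ‖ψ‖ ^ 2) + 1) := by
    intro u hu
    have hlow : ⟪ψ, u⟫ - c + q u ≤ M + q x₀ := by
      rw [← EReal.coe_le_coe_iff, EReal.coe_add, EReal.coe_add, hM]
      exact (add_le_add_left (hminor u) _).trans hu
    have hcs : -(‖ψ‖ * ‖u - v‖) ≤ ⟪ψ, u - v⟫ := neg_le_of_abs_le (abs_real_inner_le_norm _ _)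
    rw [inner_sub_right] at hcs
    rw [mem_closedBall, dist_eq_norm]
    have hr : 1 / (2 * s) * ‖u - v‖ ^ 2 * (4 * s) = 2 * ‖u - v‖ ^ 2 := by field_simp; ring
    nlinarith [sq_nonneg (‖u - v‖ - 2 * s * ‖ψ‖), sq_nonneg (‖u - v‖ - 1)]
  have hK : IsCompact {u | F u ≤ F x₀} :=
    (isCompact_closedBall _ _).of_isClosed_subset (hF.isClosed_preimage (F x₀)) hsub
  exact hF.exists_forall_le_of_isCompact hK

theorem IsProx.mem_eSubdiff {f : X → EReal} (hconv : EConvexOn f) (hbot : ∀ u, f u ≠ ⊥)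
    {s : ℝ} (hs : 0 < s) {v p : X} {fp : ℝ} (hp : IsProx f s v p) (hfp : f p = fp) :
    s⁻¹ • (v - p) ∈ ESubdiff f p := by
  intro u
  rw [hfp, ← EReal.coe_add]
  cases hu : f u using EReal.rec with
  | bot => exact absurd hu (hbot u)
  | top => exact le_top
  | coe fu =>
    set d := u - p
    set B := s⁻¹ * ⟪p - v, d⟫
    set C := 1 / (2 * s) * ‖d‖ ^ 2
    -- compare `p` with `p + t • d` via minimality and convexity, then let `t → 0⁺`
    have hstep : ∀ t ∈ Set.Ioo (0 : ℝ) 1, fp - fu ≤ B + t * C := by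
      intro t ht
      have hw : t • u + (1 - t) • p - v = (p - v) + t • d := by module
      have hconv' := hconv u p t ht.1.le ht.2.le
      rw [hu, hfp, ← EReal.coe_mul, ← EReal.coe_mul, ← EReal.coe_add] at hconv'
      have hreal : fp + 1 / (2 * s) * ‖p - v‖ ^ 2
          ≤ t * fu + (1 - t) * fp + 1 / (2 * s) * ‖(p - v) + t • d‖ ^ 2 := by
        rw [← EReal.coe_le_coe_iff, EReal.coe_add, EReal.coe_add, ← hfp, ← hw]
        exact (hp _).trans (add_le_add_left hconv' _)
      rw [norm_add_sq_real, real_inner_smul_right, norm_smul, Real.norm_eq_abs,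
        abs_of_pos ht.1] at hreal
      have hs' : 1 / (2 * s) * (2 * (t * ⟪p - v, d⟫)) = t * B := by
        simp only [B]; field_simp
      have hsq : 1 / (2 * s) * (t * ‖d‖) ^ 2 = t * (t * C) := by ring
      rw [mul_add, mul_add, hs', hsq] at hreal
      refine le_of_mul_le_mul_left ?_ ht.1
      linarith
    have hlim : Tendsto (fun t : ℝ => B + t * C) (𝓝[>] 0) (𝓝 B) :=
      tendsto_nhdsWithin_of_tendsto_nhds
        ((continuous_const.add (continuous_id.mul continuous_const)).tendsto' 0 B (by simp [B]))
    have hle := ge_of_tendsto hlim (eventually_of_mem (Ioo_mem_nhdsGT one_pos) hstep)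
    rw [EReal.coe_le_coe_iff, inner_smul_left, ← neg_sub p v, inner_neg_left]
    simp only [conj_trivial]
    linarith

theorem le_smoothedGap {f : X → EReal} (A : X →L[ℝ] Y) (b : Y) (βx βy : ℝ) {x x' : X}
    {fx fx' : ℝ} (hx : f x = fx) (hx' : f x' = fx') (y y' : Y) (xd : X) (yd : Y) :
    ((fx + ⟪A x - b, y'⟫ - (fx' + ⟪A x' - b, y⟫)
        - (βx / 2 * ‖x' - xd‖ ^ 2 + βy / 2 * ‖y' - yd‖ ^ 2) : ℝ) : EReal)
      ≤ smoothedGap f A b βx βy x y xd yd := by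
  refine le_of_eq_of_le ?_ (le_iSup _ (x', y'))
  simp only [Lag, hx, hx', ← EReal.coe_add, ← EReal.coe_sub]

theorem sq_norm_map_sub_div_le_smoothedGap {f : X → EReal} (A : X →L[ℝ] Y) (b : Y) (βx : ℝ)
    {βy : ℝ} (hβy : 0 < βy) {x : X} {fx : ℝ} (hx : f x = fx) (y : Y) :
    ((‖A x - b‖ ^ 2 / (2 * βy) : ℝ) : EReal) ≤ smoothedGap f A b βx βy x y x y := by
  refine le_of_eq_of_le (congrArg _ ?_)
    (le_smoothedGap A b βx βy hx hx y (y + βy⁻¹ • (A x - b)) x y)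
  rw [add_sub_cancel_left, inner_add_right, real_inner_smul_right, real_inner_self_eq_norm_sq,
    norm_smul, Real.norm_eq_abs, abs_inv, abs_of_pos hβy, sub_self, norm_zero]
  field_simp
  ring

theorem half_mul_sq_norm_sub_le_smoothedGap {f : X → EReal} {A : X →L[ℝ] Y} {At : Y →L[ℝ] X}
    (hAt : ∀ (u : X) (v : Y), ⟪A u, v⟫ = ⟪u, At v⟫) (b : Y) {βx : ℝ} (βy : ℝ) {x p : X}
    {fx fp : ℝ} (hx : f x = fx) (hp : f p = fp) {y : Y}
    (hsub : βx • (x - p) - At y ∈ ESubdiff f p) :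
    ((βx / 2 * ‖x - p‖ ^ 2 : ℝ) : EReal) ≤ smoothedGap f A b βx βy x y x y := by
  refine le_trans (EReal.coe_le_coe_iff.2 ?_) (le_smoothedGap A b βx βy hx hp y y x y)
  have h := hsub x
  rw [hx, hp, ← EReal.coe_add, EReal.coe_le_coe_iff, inner_sub_left, real_inner_smul_left,
    real_inner_self_eq_norm_sq, real_inner_comm] at h
  have hlin : ⟪A x - b, y⟫ - ⟪A p - b, y⟫ = ⟪x - p, At y⟫ := by
    rw [← hAt, map_sub, inner_sub_left, inner_sub_left, inner_sub_left]
    ring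
  rw [sub_self, norm_zero, norm_sub_rev p x]
  linarith

theorem sq_norm_add_adjoint_div_le_smoothedGap [FiniteDimensional ℝ X] {f : X → EReal}
    (hf_lsc : LowerSemicontinuous f) (hf_conv : EConvexOn f) {A : X →L[ℝ] Y}
    {At : Y →L[ℝ] X} (hAt : ∀ (u : X) (v : Y), ⟪A u, v⟫ = ⟪u, At v⟫) (b : Y) {βx : ℝ}
    (hβx : 0 < βx) (βy : ℝ) {x : X} {fx : ℝ} (hx : f x = fx) {y : Y} {a : X} {fa : ℝ}
    (ha : IsProj (fdom f) (-(At y)) a) (hfa : fenchel f a = fa) :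
    ((‖a + At y‖ ^ 2 / (2 * βx) : ℝ) : EReal) ≤ smoothedGap f A b βx βy x y x y := by
  have hminor := inner_sub_le_of_fenchel_eq hfa
  obtain ⟨p, hp⟩ := exists_isProx hf_lsc hminor (inv_pos.2 hβx) (x - βx⁻¹ • At y)
  have hp_ne_top : f p ≠ ⊤ := fun htop => by
    have h := hp x
    rw [htop, EReal.top_add_coe, hx, ← EReal.coe_add, top_le_iff] at h
    exact EReal.coe_ne_top _ h
  lift f p to ℝ using ⟨hp_ne_top, ne_bot_of_fenchel_eq hfa p⟩ with fp hfp
  have hsub : βx • (x - p) - At y ∈ ESubdiff f p := by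
    convert hp.mem_eSubdiff hf_conv (ne_bot_of_fenchel_eq hfa) (inv_pos.2 hβx) hfp.symm using 1
    rw [inv_inv, smul_sub, smul_sub, smul_sub, smul_inv_smul₀ hβx.ne']
    abel
  have hproj : ‖a + At y‖ ≤ βx * ‖x - p‖ := by
    have h := ha.2 _ (mem_fdom_of_mem_eSubdiff hfp.symm hsub)
    rwa [sub_neg_eq_add, sub_neg_eq_add, sub_add_cancel, norm_smul, Real.norm_of_nonneg hβx.le]
      at h
  refine le_trans (EReal.coe_le_coe_iff.2 ?_)
    (half_mul_sq_norm_sub_le_smoothedGap hAt b βy hx hfp.symm hsub)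
  rw [div_le_iff₀ (by positivity)]
  nlinarith [pow_le_pow_left₀ (norm_nonneg _) hproj 2]

theorem le_sqrt_mul_sqrt_of_sq_div_le {β r g : ℝ} (hβ : 0 < β) (h : r ^ 2 / (2 * β) ≤ g) :
    r ≤ √(2 * β) * √g := by
  rw [← Real.sqrt_mul (by positivity)]
  exact Real.le_sqrt_of_sq_le ((div_le_iff₀' (by positivity)).1 h)

theorem PDG_term_lower_bound_general
    [FiniteDimensional ℝ X]
    (f : X → EReal) (A : X →L[ℝ] Y) (At : Y →L[ℝ] X) (b : Y)
    (hf_lsc : LowerSemicontinuous f) (hf_conv : EConvexOn f)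
    (hAt : ∀ (u : X) (v : Y), ⟪A u, v⟫ = ⟪u, At v⟫)
    (βx βy : ℝ) (hβx : 0 < βx) (hβy : 0 < βy)
    (x : X) (y : Y) (fx : ℝ) (hfx : f x = (fx : EReal))
    (a : X) (ha : IsProj (fdom f) (-(At y)) a)
    (fa : ℝ) (hfa : fenchel f a = (fa : EReal))
    (g : ℝ) (hg : smoothedGap f A b βx βy x y x y = (g : EReal)) :
    -((Real.sqrt (2 * βx) * ‖x‖ + Real.sqrt (2 * βy) * ‖y‖) * Real.sqrt g)
      ≤ fx + fa + ⟪b, y⟫ := by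
  have hdual : ‖a + At y‖ ≤ √(2 * βx) * √g := le_sqrt_mul_sqrt_of_sq_div_le hβx <|
    EReal.coe_le_coe_iff.1 <| hg ▸
      sq_norm_add_adjoint_div_le_smoothedGap hf_lsc hf_conv hAt b hβx βy hfx ha hfa
  have hprimal : ‖A x - b‖ ≤ √(2 * βy) * √g := le_sqrt_mul_sqrt_of_sq_div_le hβy <|
    EReal.coe_le_coe_iff.1 <| hg ▸ sq_norm_map_sub_div_le_smoothedGap A b βx hβy hfx y
  have hfenchel_young : ⟪a, x⟫ - fa ≤ fx :=
    EReal.coe_le_coe_iff.1 (hfx ▸ inner_sub_le_of_fenchel_eq hfa x)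
  have hsplit : ⟪a, x⟫ + ⟪b, y⟫ = ⟪a + At y, x⟫ - ⟪A x - b, y⟫ := by
    rw [inner_add_left, inner_sub_left, hAt, real_inner_comm (At y)]
    ring
  have hcs_x := (neg_le_of_abs_le (abs_real_inner_le_norm (a + At y) x)).trans' <| neg_le_neg <|
    mul_le_mul_of_nonneg_right hdual (norm_nonneg x)
  have hcs_y := (real_inner_le_norm (A x - b) y).trans <|
    mul_le_mul_of_nonneg_right hprimal (norm_nonneg y)
  linarith

/-- lower bound on the projected duality-gap term.
Assume `dom f*` is nonempty and closed.  Then for every `z = (x, y)` with `f(x) < +∞`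
(its finite value `fx` given by `hfx`), with `a = Proj_{dom f*}(−Aᵀy)` (whose conjugate
value `fa = f*(a)` is given by `hfa`) and `g` the (finite) value of the self-centered
smoothed gap, `f(x) + f*(a) + ⟪b, y⟫ ≥ −(√(2βx)‖x‖ + √(2βy)‖y‖) √g`. -/
theorem PDG_term_lower_bound
    [FiniteDimensional ℝ X] [FiniteDimensional ℝ Y]
    (f : X → EReal) (A : X →L[ℝ] Y) (At : Y →L[ℝ] X) (b : Y)
    (hf_proper : EProper f) (hf_lsc : LowerSemicontinuous f) (hf_conv : EConvexOn f)
    (hAt : ∀ (u : X) (v : Y), ⟪A u, v⟫ = ⟪u, At v⟫)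
    (βx βy : ℝ) (hβx : 0 < βx) (hβy : 0 < βy)
    (hdom_ne : (fdom f).Nonempty) (hdom_closed : IsClosed (fdom f))
    (x : X) (y : Y) (fx : ℝ) (hfx : f x = (fx : EReal))
    (a : X) (ha : IsProj (fdom f) (-(At y)) a)
    (fa : ℝ) (hfa : fenchel f a = (fa : EReal))
    (g : ℝ) (hg : smoothedGap f A b βx βy x y x y = (g : EReal)) :
    -((Real.sqrt (2 * βx) * ‖x‖ + Real.sqrt (2 * βy) * ‖y‖) * Real.sqrt g)
      ≤ fx + fa + ⟪b, y⟫ :=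
  PDG_term_lower_bound_general f A At b hf_lsc hf_conv hAt βx βy hβx hβy x y fx hfx a ha fa hfa g hg
end
end
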